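/- The pipe network map PN, sending a tuple of pipe dreams (P_n, P^n, …, P_1, P^1) to the pipe dream in Pipes(v_0, v(Ω)) having P_k in its β_k block, rot(P^k) in its α_k block, and crosses at all other positions of the northwest d_y×d_x subgrid (i.e. containing P_*), is a bijection from the union over v ∈ X_Ω of ∏_{i=1}^n (Pipes(v_i) × Pipes(v^i)) onto Pipes(v_0, v(Ω)). -/

import Mathlib

open scoped Classical

noncomputable section

namespace QP

/-! ### Permutations, Demazure products and pipe dreams.

All permutations are modeled as elements of `Equiv.Perm ℕ` (with 0-indexed
positions); a permutation "in `S_m`" is one fixing every `i ≥ m`. -/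

/-- 0-Hecke (Demazure) right multiplication by the simple transposition `τᵢ = (i, i+1)`. -/
def hstep (u : Equiv.Perm ℕ) (i : ℕ) : Equiv.Perm ℕ :=
  if u i < u (i + 1) then u * Equiv.swap i (i + 1) else u

/-- Demazure product of a word in the simple transpositions (0-indexed). -/
def hword (l : List ℕ) : Equiv.Perm ℕ := l.foldl hstep 1

/-- Row reading word of a pipe dream on a `k × l` grid: rows top-to-bottom, within
each row right-to-left; a cross at (0-indexed) `(i,j)` contributes the letter `i+j`. -/
def pipeWord (k l : ℕ) (P : Finset (ℕ × ℕ)) : List ℕ :=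
  (List.range k).flatMap fun i =>
    (List.range l).reverse.filterMap fun j => if (i, j) ∈ P then some (i + j) else none

/-- Demazure product `δ(P)` of a pipe dream on a `k × l` grid. -/
def demazure (k l : ℕ) (P : Finset (ℕ × ℕ)) : Equiv.Perm ℕ := hword (pipeWord k l P)

/-- Coxeter length of a permutation, computed as the number of inversions among
positions `< m` (the true length whenever the permutation fixes all `i ≥ m`). -/
def lenB (m : ℕ) (v : Equiv.Perm ℕ) : ℕ :=
  ((Finset.range m ×ˢ Finset.range m).filter fun p => p.1 < p.2 ∧ v p.2 < v p.1).card

/-- `v` fixes every point `≥ m`, i.e. `v ∈ S_m`. -/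
def fixesFrom (m : ℕ) (v : Equiv.Perm ℕ) : Prop := ∀ i, m ≤ i → v i = i

/-- A `k × l` partial permutation matrix, recorded as its set of positions of 1s
(0-indexed). -/
def IsPartialPerm (k l : ℕ) (w : Finset (ℕ × ℕ)) : Prop :=
  (∀ p ∈ w, p.1 < k ∧ p.2 < l) ∧
  (∀ p ∈ w, ∀ q ∈ w, p.1 = q.1 → p = q) ∧
  (∀ p ∈ w, ∀ q ∈ w, p.2 = q.2 → p = q)

/-- 180° rotation of a subset of the `k × l` grid. -/
def rotF (k l : ℕ) (w : Finset (ℕ × ℕ)) : Finset (ℕ × ℕ) :=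
  w.image fun p => (k - 1 - p.1, l - 1 - p.2)

/-- Transpose of a subset of a grid. -/
def transposeF (w : Finset (ℕ × ℕ)) : Finset (ℕ × ℕ) := w.image fun p => (p.2, p.1)

/-- The northwest `k × l` truncation of (the matrix of) a permutation. -/
def matrixOf (k l : ℕ) (v : Equiv.Perm ℕ) : Finset (ℕ × ℕ) :=
  (Finset.range k ×ˢ Finset.range l).filter fun p => v p.1 = p.2

/-- `v` is a completion of the `k × l` partial permutation `w`, viewed inside
`S_{k+l}`: its northwest `k × l` corner is exactly `w` and it fixes all `i ≥ k+l`. -/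
def IsCompletion (k l : ℕ) (w : Finset (ℕ × ℕ)) (v : Equiv.Perm ℕ) : Prop :=
  (∀ i < k, ∀ j < l, (v i = j ↔ (i, j) ∈ w)) ∧ fixesFrom (k + l) v

/-- The minimal length completion `c(w)` of a `k × l` partial permutation matrix,
viewed in `S_{k+l}` (equivalently, the minimal-dimension completion extended by the
identity). -/
def completion (k l : ℕ) (w : Finset (ℕ × ℕ)) : Equiv.Perm ℕ :=
  if h : ∃ v, IsCompletion k l w v ∧
      ∀ u, IsCompletion k l w u → lenB (k + l) v ≤ lenB (k + l) u
  then h.choose else 1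

def w0fun (m : ℕ) (i : ℕ) : ℕ := if i < m then m - 1 - i else i

lemma w0_invol (m : ℕ) : Function.Involutive (w0fun m) := by
  intro i; unfold w0fun; split_ifs <;> omega

/-- The longest element of `S_m` (as a permutation of `ℕ` fixing `i ≥ m`). -/
def w0p (m : ℕ) : Equiv.Perm ℕ := (w0_invol m).toPerm

/-- 180° rotation of (the matrix of) a permutation in `S_m`. -/
def rotPerm (m : ℕ) (v : Equiv.Perm ℕ) : Equiv.Perm ℕ := w0p m * v * w0p m

/-- `1^p × v`: the permutation fixing `0, …, p-1` and acting by a shifted copy of `v`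
beyond. -/
def shiftPerm (p : ℕ) (v : Equiv.Perm ℕ) : Equiv.Perm ℕ where
  toFun i := if i < p then i else v (i - p) + p
  invFun i := if i < p then i else v.symm (i - p) + p
  left_inv := by
    intro i
    by_cases h : i < p
    · simp [h]
    · have h2 : ¬ (v (i - p) + p < p) := by omega
      simp only [if_neg h, if_neg h2, Nat.add_sub_cancel, Equiv.symm_apply_apply]
      omega
  right_inv := by
    intro i
    by_cases h : i < p
    · simp [h]
    · have h2 : ¬ (v.symm (i - p) + p < p) := by omega
      simp only [if_neg h, if_neg h2, Nat.add_sub_cancel, Equiv.apply_symm_apply]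
      omega

/-- One step of the 0-Hecke product of two permutations: repeatedly peel left
descents off the second factor. The first argument is fuel (an upper bound for the
length of the second factor). -/
def heckeAux : ℕ → Equiv.Perm ℕ → Equiv.Perm ℕ → Equiv.Perm ℕ
  | 0, u, _ => u
  | fuel + 1, u, v =>
    if h : ∃ i, v.symm (i + 1) < v.symm i then
      heckeAux fuel (hstep u (Nat.find h)) (Equiv.swap (Nat.find h) (Nat.find h + 1) * v)
    else u

/-- 0-Hecke (Demazure) product of two permutations of `S_m`. -/
def heckeMul (m : ℕ) (u v : Equiv.Perm ℕ) : Equiv.Perm ℕ := heckeAux (lenB m v) u v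

/-- 0-Hecke (Demazure) product of a list of permutations of `S_m`. -/
def heckeList (m : ℕ) (l : List (Equiv.Perm ℕ)) : Equiv.Perm ℕ := l.foldl (heckeMul m) 1

/-- All pipe dreams on the `k × l` grid with Demazure product `v`. -/
def pipesFin (k l : ℕ) (v : Equiv.Perm ℕ) : Finset (Finset (ℕ × ℕ)) :=
  ((Finset.range k ×ˢ Finset.range l).powerset).filter fun P => demazure k l P = v

/-- All reduced pipe dreams on the `k × l` grid with Demazure product `v`. -/
def rpipesFin (k l : ℕ) (v : Equiv.Perm ℕ) : Finset (Finset (ℕ × ℕ)) :=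
  (pipesFin k l v).filter fun P => P.card = lenB (k + l) v

end QP

namespace QP

/-! ### The bipartite quiver block structure.

A bipartite type `A` quiver has source vertices `y_0, …, y_n` and sink vertices
`x_1, …, x_n` (indices increasing right-to-left), arrows `β_k : y_k → x_k` and
`α_k : y_{k-1} → x_k`.  Dimension vectors are recorded as `dx dy : ℕ → ℕ` (the
relevant values being `dx 1, …, dx n` and `dy 0, …, dy n`).

`d × d` grids carry the block structure with row blocks `y_0, …, y_n, x_n, …, x_1`
and column blocks `x_n, …, x_1, y_0, …, y_n`; everything is 0-indexed. -/

def dX (n : ℕ) (dx : ℕ → ℕ) : ℕ := ∑ i ∈ Finset.Icc 1 n, dx i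

def dY (n : ℕ) (dy : ℕ → ℕ) : ℕ := ∑ i ∈ Finset.range (n + 1), dy i

def dd (n : ℕ) (dx dy : ℕ → ℕ) : ℕ := dY n dy + dX n dx

/-- Row offset of the row block `y_j`. -/
def rowY (dy : ℕ → ℕ) (j : ℕ) : ℕ := ∑ i ∈ Finset.range j, dy i

/-- Column offset of the column block `x_k`. -/
def colX (n : ℕ) (dx : ℕ → ℕ) (k : ℕ) : ℕ := ∑ i ∈ Finset.Icc (k + 1) n, dx i

/-- Row offset of the row block `x_k`. -/
def rowX (n : ℕ) (dx dy : ℕ → ℕ) (k : ℕ) : ℕ := dY n dy + colX n dx k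

/-- Column offset of the column block `y_j`. -/
def colY (n : ℕ) (dx dy : ℕ → ℕ) (j : ℕ) : ℕ := dX n dx + rowY dy j

/-- The block `α_k`, at (row block `y_{k-1}`, column block `x_k`). -/
def alphaBlock (n : ℕ) (dx dy : ℕ → ℕ) (k : ℕ) : Finset (ℕ × ℕ) :=
  Finset.Ico (rowY dy (k - 1)) (rowY dy (k - 1) + dy (k - 1)) ×ˢ
    Finset.Ico (colX n dx k) (colX n dx k + dx k)

/-- The block `β_k`, at (row block `y_k`, column block `x_k`). -/
def betaBlock (n : ℕ) (dx dy : ℕ → ℕ) (k : ℕ) : Finset (ℕ × ℕ) :=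
  Finset.Ico (rowY dy k) (rowY dy k + dy k) ×ˢ
    Finset.Ico (colX n dx k) (colX n dx k + dx k)

/-- The snake region: the union of the blocks `α_k, β_k`, `1 ≤ k ≤ n`. -/
def snake (n : ℕ) (dx dy : ℕ → ℕ) : Finset (ℕ × ℕ) :=
  (Finset.Icc 1 n).biUnion fun k => alphaBlock n dx dy k ∪ betaBlock n dx dy k

/-- `P_*`: crosses at exactly the positions of the northwest `d_y × d_x` subgrid
outside the snake region. -/
def Pstar (n : ℕ) (dx dy : ℕ → ℕ) : Finset (ℕ × ℕ) :=
  (Finset.range (dY n dy) ×ˢ Finset.range (dX n dx)) \ snake n dx dy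

/-- `Pipes(v_0, v)`: pipe dreams on the `d × d` grid with Demazure product `v`, all
of whose crosses lie in the northwest `d_y × d_x` subgrid. -/
def pipesNW (n : ℕ) (dx dy : ℕ → ℕ) (v : Equiv.Perm ℕ) : Finset (Finset (ℕ × ℕ)) :=
  ((Finset.range (dY n dy) ×ˢ Finset.range (dX n dx)).powerset).filter fun P =>
    demazure (dd n dx dy) (dd n dx dy) P = v

/-- `RPipes(v_0, v)`: the reduced members of `Pipes(v_0, v)`. -/
def rpipesNW (n : ℕ) (dx dy : ℕ → ℕ) (v : Equiv.Perm ℕ) : Finset (Finset (ℕ × ℕ)) :=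
  (pipesNW n dx dy v).filter fun P => P.card = lenB (dd n dx dy) v

/-- The mini pipe dream `P_k`: restriction of `P` to the block `β_k`, in local
coordinates. -/
def miniB (n : ℕ) (dx dy : ℕ → ℕ) (P : Finset (ℕ × ℕ)) (k : ℕ) : Finset (ℕ × ℕ) :=
  (P ∩ betaBlock n dx dy k).image fun p => (p.1 - rowY dy k, p.2 - colX n dx k)

/-- The mini pipe dream `P^k`: restriction of `P` to the block `α_k`, in local
coordinates. -/
def miniA (n : ℕ) (dx dy : ℕ → ℕ) (P : Finset (ℕ × ℕ)) (k : ℕ) : Finset (ℕ × ℕ) :=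
  (P ∩ alphaBlock n dx dy k).image fun p => (p.1 - rowY dy (k - 1), p.2 - colX n dx k)

/-! ### Lacing diagrams and the group `S_𝐝`. -/

/-- Data of a lacing diagram: partial permutations `w_k` (of size `dy k × dx k`,
for the arrows `β_k`) and `w^k` (of size `dy (k-1) × dx k`, for the arrows `α_k`). -/
abbrev LaceData := (ℕ → Finset (ℕ × ℕ)) × (ℕ → Finset (ℕ × ℕ))

/-- Elements of `S_𝐝 = ∏_k (S_{β_k} × S_{α_k})`: tuples `(v_k, v^k)_k` of
permutations, `v_k ∈ S_{dy k + dx k}` and `v^k ∈ S_{dy (k-1) + dx k}`. -/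
abbrev SD := (ℕ → Equiv.Perm ℕ) × (ℕ → Equiv.Perm ℕ)

def IsLacingDiagram (n : ℕ) (dx dy : ℕ → ℕ) (L : LaceData) : Prop :=
  (∀ k, 1 ≤ k → k ≤ n →
    IsPartialPerm (dy k) (dx k) (L.1 k) ∧ IsPartialPerm (dy (k - 1)) (dx k) (L.2 k)) ∧
  (∀ k, k = 0 ∨ n < k → L.1 k = ∅ ∧ L.2 k = ∅)

def InSD (n : ℕ) (dx dy : ℕ → ℕ) (x : SD) : Prop :=
  (∀ k, 1 ≤ k → k ≤ n →
    fixesFrom (dy k + dx k) (x.1 k) ∧ fixesFrom (dy (k - 1) + dx k) (x.2 k)) ∧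
  (∀ k, k = 0 ∨ n < k → x.1 k = 1 ∧ x.2 k = 1)

/-- The completion map `𝔠 : Laces(𝐝) → S_𝐝`,
`(w_n, w^n, …) ↦ (c(w_n), c(rot(w^n)), …)`. -/
def cOp (n : ℕ) (dx dy : ℕ → ℕ) (L : LaceData) : SD :=
  (fun k => if 1 ≤ k ∧ k ≤ n then completion (dy k) (dx k) (L.1 k) else 1,
   fun k => if 1 ≤ k ∧ k ≤ n then
      completion (dy (k - 1)) (dx k) (rotF (dy (k - 1)) (dx k) (L.2 k)) else 1)

/-- The truncation map `LD : S_𝐝 → Laces(𝐝)`,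
`(v_k, v^k)_k ↦ (t_k(v_k), rot(t^k(v^k)))_k`. -/
def LDOp (n : ℕ) (dx dy : ℕ → ℕ) (x : SD) : LaceData :=
  (fun k => if 1 ≤ k ∧ k ≤ n then matrixOf (dy k) (dx k) (x.1 k) else ∅,
   fun k => if 1 ≤ k ∧ k ≤ n then
      rotF (dy (k - 1)) (dx k) (matrixOf (dy (k - 1)) (dx k) (x.2 k)) else ∅)

/-- The operation `π` on pipe dreams:
`π(P) = (δ(P_n), δ(rot(P^n)), …, δ(P_1), δ(rot(P^1))) ∈ S_𝐝`. -/
def piOp (n : ℕ) (dx dy : ℕ → ℕ) (P : Finset (ℕ × ℕ)) : SD :=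
  (fun k => if 1 ≤ k ∧ k ≤ n then demazure (dy k) (dx k) (miniB n dx dy P k) else 1,
   fun k => if 1 ≤ k ∧ k ≤ n then
      demazure (dy (k - 1)) (dx k) (rotF (dy (k - 1)) (dx k) (miniA n dx dy P k)) else 1)

/-- "Follow the pipes" for a single pipe dream on a `k × l` grid: the partial
permutation matrix connecting the west wall to the north wall (double crossings of a
pair of pipes being ignored); concretely, the northwest `k × l` truncation of the
matrix of the Demazure product. -/
def followPipes (k l : ℕ) (P : Finset (ℕ × ℕ)) : Finset (ℕ × ℕ) :=
  matrixOf k l (demazure k l P)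

/-- The pipes-to-laces operation `𝔴`. -/
def wOp (n : ℕ) (dx dy : ℕ → ℕ) (P : Finset (ℕ × ℕ)) : LaceData :=
  (fun k => if 1 ≤ k ∧ k ≤ n then followPipes (dy k) (dx k) (miniB n dx dy P k) else ∅,
   fun k => if 1 ≤ k ∧ k ≤ n then
      rotF (dy (k - 1)) (dx k)
        (followPipes (dy (k - 1)) (dx k) (rotF (dy (k - 1)) (dx k) (miniA n dx dy P k)))
    else ∅)

end QP

namespace QP

/-! ### Laces and lace counts.

Columns of a lacing diagram are indexed left-to-right by `1, …, 2n+1`: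
odd position `2m+1` carries the vertex `y_{n-m}`, even position `2m` the vertex
`x_{n-m+1}`. -/

/-- Number of dots in the column at position `p`. -/
def colSize (n : ℕ) (dx dy : ℕ → ℕ) (p : ℕ) : ℕ :=
  if p % 2 = 1 then dy (n - (p - 1) / 2) else dx (n - p / 2 + 1)

/-- The matching (partial permutation) between consecutive columns `p` and `p+1`
of a lacing diagram. -/
def matchingAt (n : ℕ) (_dx _dy : ℕ → ℕ) (L : LaceData) (p : ℕ) : Finset (ℕ × ℕ) :=
  if p % 2 = 1 then L.1 (n - (p - 1) / 2) else transposeF (L.2 (n - p / 2 + 1))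

/-- Composition of relations (partial permutations). -/
def compF (A B : Finset (ℕ × ℕ)) : Finset (ℕ × ℕ) :=
  ((A ×ˢ B).filter fun q => q.1.2 = q.2.1).image fun q => (q.1.1, q.2.2)

/-- Paths of the lacing diagram from column `u` to column `u + t`. -/
def pathF (n : ℕ) (dx dy : ℕ → ℕ) (L : LaceData) (u : ℕ) : ℕ → Finset (ℕ × ℕ)
  | 0 => (Finset.range (colSize n dx dy u)).image fun i => (i, i)
  | t + 1 => compF (pathF n dx dy L u t) (matchingAt n dx dy L (u + t))

/-- Number of paths (strands) of the lacing diagram connecting column `u` to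
column `v` (zero if out of range). -/
def pathCount (n : ℕ) (dx dy : ℕ → ℕ) (L : LaceData) (u v : ℕ) : ℕ :=
  if 1 ≤ u ∧ u ≤ v ∧ v ≤ 2 * n + 1 then (pathF n dx dy L u (v - u)).card else 0

/-- Number of laces with left endpoint in column `u` and right endpoint in column
`v` (by inclusion–exclusion on path counts). -/
def laceCount (n : ℕ) (dx dy : ℕ → ℕ) (L : LaceData) (u v : ℕ) : ℤ :=
  (pathCount n dx dy L u v : ℤ) - pathCount n dx dy L (u - 1) v
    - pathCount n dx dy L u (v + 1) + pathCount n dx dy L (u - 1) (v + 1)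

/-- Two lacing diagrams lie in the same `GL(𝐝)`-orbit iff they have the same number
of laces between any two pairs of columns. -/
def sameOrbit (n : ℕ) (dx dy : ℕ → ℕ) (L L' : LaceData) : Prop :=
  ∀ u v, laceCount n dx dy L u v = laceCount n dx dy L' u v

/-- `|w|`: the number of crossings in the extended lacing diagram of `w`, namely
`Σ_k ℓ(c(w_k)) + Σ_k ℓ(c(rot(w^k)))`. -/
def lacingLength (n : ℕ) (dx dy : ℕ → ℕ) (L : LaceData) : ℕ :=
  (∑ k ∈ Finset.Icc 1 n, lenB (dy k + dx k) (completion (dy k) (dx k) (L.1 k))) +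
  ∑ k ∈ Finset.Icc 1 n,
    lenB (dy (k - 1) + dx k)
      (completion (dy (k - 1)) (dx k) (rotF (dy (k - 1)) (dx k) (L.2 k)))

/-- `W(Ω)`: minimal lacing diagrams in the orbit of `L₀`. -/
def MinimalLacings (n : ℕ) (dx dy : ℕ → ℕ) (L₀ : LaceData) : Set LaceData :=
  {w | IsLacingDiagram n dx dy w ∧ sameOrbit n dx dy w L₀ ∧
    ∀ w', IsLacingDiagram n dx dy w' → sameOrbit n dx dy w' L₀ →
      lacingLength n dx dy w ≤ lacingLength n dx dy w'}

/-! ### The Zelevinsky permutation. -/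

/-- The set of rows of the row block of the vertex at position `p`. -/
def vertRowBlock (n : ℕ) (dx dy : ℕ → ℕ) (p : ℕ) : Finset ℕ :=
  if p % 2 = 1 then
    Finset.Ico (rowY dy (n - (p - 1) / 2)) (rowY dy (n - (p - 1) / 2) + dy (n - (p - 1) / 2))
  else
    Finset.Ico (rowX n dx dy (n - p / 2 + 1)) (rowX n dx dy (n - p / 2 + 1) + dx (n - p / 2 + 1))

/-- The set of columns of the column block of the vertex at position `p`. -/
def vertColBlock (n : ℕ) (dx dy : ℕ → ℕ) (p : ℕ) : Finset ℕ :=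
  if p % 2 = 1 then
    Finset.Ico (colY n dx dy (n - (p - 1) / 2)) (colY n dx dy (n - (p - 1) / 2) + dy (n - (p - 1) / 2))
  else
    Finset.Ico (colX n dx (n - p / 2 + 1)) (colX n dx (n - p / 2 + 1) + dx (n - p / 2 + 1))

/-- Number of 1s of the permutation matrix of `v` in the rows `R` and columns `C`. -/
def onesIn (v : Equiv.Perm ℕ) (R C : Finset ℕ) : ℕ := (R.filter fun i => v i ∈ C).card

/-- `v` is the (bipartite) Zelevinsky permutation of the orbit of the lacing diagram
`L`: conditions (Z1), (Z2) on block entry counts and (Z3) northwest-to-southeast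
arrangement in each block row and block column. -/
def IsZelevinsky (n : ℕ) (dx dy : ℕ → ℕ) (L : LaceData) (v : Equiv.Perm ℕ) : Prop :=
  fixesFrom (dd n dx dy) v ∧
  -- (Z1)
  (∀ pu pv, 1 ≤ pu → pu ≤ pv → pv ≤ 2 * n + 1 →
    (onesIn v (vertRowBlock n dx dy pu) (vertColBlock n dx dy pv) : ℤ)
      = laceCount n dx dy L pu pv) ∧
  -- (Z2)
  (∀ p, 1 ≤ p → p + 1 ≤ 2 * n + 1 →
    onesIn v (vertRowBlock n dx dy (p + 1)) (vertColBlock n dx dy p)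
      = (matchingAt n dx dy L p).card) ∧
  -- (Z3), block rows
  (∀ p, 1 ≤ p → p ≤ 2 * n + 1 → ∀ i ∈ vertRowBlock n dx dy p, ∀ i' ∈ vertRowBlock n dx dy p,
    i < i' →
    (∃ q, 1 ≤ q ∧ q ≤ 2 * n + 1 ∧ v i ∈ vertColBlock n dx dy q ∧ v i' ∈ vertColBlock n dx dy q) →
    v i < v i') ∧
  -- (Z3), block columns
  (∀ p, 1 ≤ p → p ≤ 2 * n + 1 → ∀ j ∈ vertColBlock n dx dy p, ∀ j' ∈ vertColBlock n dx dy p,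
    j < j' →
    (∃ q, 1 ≤ q ∧ q ≤ 2 * n + 1 ∧ v.symm j ∈ vertRowBlock n dx dy q ∧
      v.symm j' ∈ vertRowBlock n dx dy q) →
    v.symm j < v.symm j')

/-- `v_*`: the Zelevinsky permutation of the whole representation space, i.e. the
Zelevinsky permutation of an orbit, of minimal length (the dense orbit). -/
def IsStarZelevinsky (n : ℕ) (dx dy : ℕ → ℕ) (v : Equiv.Perm ℕ) : Prop :=
  (∃ L, IsLacingDiagram n dx dy L ∧ IsZelevinsky n dx dy L v) ∧
  ∀ L' v', IsLacingDiagram n dx dy L' → IsZelevinsky n dx dy L' v' →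
    lenB (dd n dx dy) v ≤ lenB (dd n dx dy) v'

/-! ### `X_Ω`, pipe networks, and moves. -/

/-- `X_Ω = {π(P) : P ∈ Pipes(v_0, v(Ω))}` (here parametrized by `v(Ω)`). -/
def XOmega (n : ℕ) (dx dy : ℕ → ℕ) (vZ : Equiv.Perm ℕ) : Set SD :=
  {x | ∃ P ∈ pipesNW n dx dy vZ, piOp n dx dy P = x}

/-- `X_Ω^red = {π(P) : P ∈ RPipes(v_0, v(Ω))}`. -/
def XOmegaRed (n : ℕ) (dx dy : ℕ → ℕ) (vZ : Equiv.Perm ℕ) : Set SD :=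
  {x | ∃ P ∈ rpipesNW n dx dy vZ, piOp n dx dy P = x}

/-- Pipe networks for a lacing diagram `w`: pipe dreams on the `d_y × d_x` grid
containing `P_*` with `P_k ∈ Pipes(w_k)` and `rot(P^k) ∈ Pipes(w^k)` for all `k`. -/
def PipeNet (n : ℕ) (dx dy : ℕ → ℕ) (w : LaceData) : Set (Finset (ℕ × ℕ)) :=
  {P | (∀ p ∈ P, p.1 < dY n dy ∧ p.2 < dX n dx) ∧ Pstar n dx dy ⊆ P ∧
    ∀ k, 1 ≤ k → k ≤ n →
      demazure (dy k) (dx k) (miniB n dx dy P k) = completion (dy k) (dx k) (w.1 k) ∧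
      demazure (dy (k - 1)) (dx k) (rotF (dy (k - 1)) (dx k) (miniA n dx dy P k))
        = completion (dy (k - 1)) (dx k) (w.2 k)}

/-- PN-reduced pipe networks: each mini pipe dream is a reduced pipe dream of the
corresponding partial permutation. -/
def RPipeNet (n : ℕ) (dx dy : ℕ → ℕ) (w : LaceData) : Set (Finset (ℕ × ℕ)) :=
  {P | P ∈ PipeNet n dx dy w ∧ ∀ k, 1 ≤ k → k ≤ n →
    (miniB n dx dy P k).card = lenB (dy k + dx k) (completion (dy k) (dx k) (w.1 k)) ∧
    (rotF (dy (k - 1)) (dx k) (miniA n dx dy P k)).card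
      = lenB (dy (k - 1) + dx k) (completion (dy (k - 1)) (dx k) (w.2 k))}

def updB (z : SD) (i : ℕ) (p : Equiv.Perm ℕ) : SD := (Function.update z.1 i p, z.2)

def updA (z : SD) (i : ℕ) (p : Equiv.Perm ℕ) : SD := (z.1, Function.update z.2 i p)

/-- The three tuples `(…, τ_k v_i, v^i, …)`, `(…, v_i, rot(τ_{k'} rot(v^i)), …)`,
`(…, τ_k v_i, rot(τ_{k'} rot(v^i)), …)` obtained from the base tuple `z` at a middle
column `x_i` and middle dots `k, k+1` (0-indexed; `k' = dy (i-1) + k`). -/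
def tripleX (dx dy : ℕ → ℕ) (z : SD) (i k : ℕ) : Set SD :=
  {updB z i (Equiv.swap k (k + 1) * z.1 i),
   updA z i (rotPerm (dy (i - 1) + dx i)
     (Equiv.swap (dy (i - 1) + k) (dy (i - 1) + k + 1) * rotPerm (dy (i - 1) + dx i) (z.2 i))),
   updA (updB z i (Equiv.swap k (k + 1) * z.1 i)) i
     (rotPerm (dy (i - 1) + dx i)
       (Equiv.swap (dy (i - 1) + k) (dy (i - 1) + k + 1) * rotPerm (dy (i - 1) + dx i) (z.2 i)))}

/-- The three tuples `(…, v^{i+1}, v_i τ_l, …)`, `(…, rot(rot(v^{i+1}) τ_{l'}), v_i, …)`,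
`(…, rot(rot(v^{i+1}) τ_{l'}), v_i τ_l, …)` obtained from the base tuple `z` at a middle
column `y_i` and middle dots `l, l+1` (0-indexed; `l' = dx (i+1) + l`). -/
def tripleY (dx dy : ℕ → ℕ) (z : SD) (i l : ℕ) : Set SD :=
  {updB z i (z.1 i * Equiv.swap l (l + 1)),
   updA z (i + 1) (rotPerm (dy i + dx (i + 1))
     (rotPerm (dy i + dx (i + 1)) (z.2 (i + 1)) *
       Equiv.swap (dx (i + 1) + l) (dx (i + 1) + l + 1))),
   updA (updB z i (z.1 i * Equiv.swap l (l + 1))) (i + 1)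
     (rotPerm (dy i + dx (i + 1))
       (rotPerm (dy i + dx (i + 1)) (z.2 (i + 1)) *
         Equiv.swap (dx (i + 1) + l) (dx (i + 1) + l + 1)))}

/-- The transposition moves on `S_𝐝` (the moves of the transposition-move lemma,
interchanging any two of the tuples of types 1(a), 1(b), 1(c), respectively
2(a), 2(b), 2(c), under the stated ascent conditions). -/
def Move14Rel (n : ℕ) (dx dy : ℕ → ℕ) (u u' : SD) : Prop :=
  (∃ z : SD, ∃ i k, 1 ≤ i ∧ i ≤ n ∧ k + 1 < dx i ∧
    (z.1 i).symm k < (z.1 i).symm (k + 1) ∧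
    (rotPerm (dy (i - 1) + dx i) (z.2 i)).symm (dy (i - 1) + k)
      < (rotPerm (dy (i - 1) + dx i) (z.2 i)).symm (dy (i - 1) + k + 1) ∧
    u ∈ tripleX dx dy z i k ∧ u' ∈ tripleX dx dy z i k ∧ u ≠ u') ∨
  (∃ z : SD, ∃ i l, 1 ≤ i ∧ i + 1 ≤ n ∧ l + 1 < dy i ∧
    z.1 i l < z.1 i (l + 1) ∧
    z.2 (i + 1) (dx (i + 1) + l) < z.2 (i + 1) (dx (i + 1) + l + 1) ∧
    u ∈ tripleY dx dy z i l ∧ u' ∈ tripleY dx dy z i l ∧ u ≠ u')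

/-- The K-theoretic lacing diagram moves, at the level of extended lacing diagrams
(elements of `S_𝐝`): local moves at a middle column (`x_i` or `y_i`) through two
adjacent non-virtual middle dots, where the two strands through the middle dots are
uncrossed on both sides in the base configuration and at least one of their endpoints
in each outer column is non-virtual; any two of the three resulting configurations
(crossed left / crossed both / crossed right) are interchanged. -/
def KMoveRel (n : ℕ) (dx dy : ℕ → ℕ) (u u' : SD) : Prop :=
  (∃ z : SD, ∃ i k, 1 ≤ i ∧ i ≤ n ∧ k + 1 < dx i ∧
    (z.1 i).symm k < (z.1 i).symm (k + 1) ∧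
    (rotPerm (dy (i - 1) + dx i) (z.2 i)).symm (dy (i - 1) + k)
      < (rotPerm (dy (i - 1) + dx i) (z.2 i)).symm (dy (i - 1) + k + 1) ∧
    ((z.1 i).symm k < dy i ∨ (z.1 i).symm (k + 1) < dy i) ∧
    (dx i ≤ (rotPerm (dy (i - 1) + dx i) (z.2 i)).symm (dy (i - 1) + k) ∨
      dx i ≤ (rotPerm (dy (i - 1) + dx i) (z.2 i)).symm (dy (i - 1) + k + 1)) ∧
    u ∈ tripleX dx dy z i k ∧ u' ∈ tripleX dx dy z i k ∧ u ≠ u') ∨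
  (∃ z : SD, ∃ i l, 1 ≤ i ∧ i + 1 ≤ n ∧ l + 1 < dy i ∧
    z.1 i l < z.1 i (l + 1) ∧
    rotPerm (dy i + dx (i + 1)) (z.2 (i + 1)) (dx (i + 1) + l)
      < rotPerm (dy i + dx (i + 1)) (z.2 (i + 1)) (dx (i + 1) + l + 1) ∧
    (z.1 i l < dx i ∨ z.1 i (l + 1) < dx i) ∧
    (dy i ≤ rotPerm (dy i + dx (i + 1)) (z.2 (i + 1)) (dx (i + 1) + l) ∨
      dy i ≤ rotPerm (dy i + dx (i + 1)) (z.2 (i + 1)) (dx (i + 1) + l + 1)) ∧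
    u ∈ tripleY dx dy z i l ∧ u' ∈ tripleY dx dy z i l ∧ u ≠ u')

/-- Extended diagrams reachable from (the completion of) a minimal lacing diagram by
K-theoretic lacing diagram moves. -/
def KWext (n : ℕ) (dx dy : ℕ → ℕ) (L₀ : LaceData) : Set SD :=
  {x | ∃ w ∈ MinimalLacings n dx dy L₀,
    Relation.ReflTransGen (KMoveRel n dx dy) (cOp n dx dy w) x}

/-- `KW(Ω)`: the K-theoretic lacing diagrams for the orbit of `L₀`. -/
def KW (n : ℕ) (dx dy : ℕ → ℕ) (L₀ : LaceData) : Set LaceData :=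
  LDOp n dx dy '' KWext n dx dy L₀

end QP

namespace QP

/-! ### Alphabets and Schubert / Grothendieck polynomials. -/

/-- Index of the row block `y_j` containing row `r` (for `r < d_y`). -/
def yRowIdx (n : ℕ) (dy : ℕ → ℕ) (r : ℕ) : ℕ :=
  WithBot.unbotD 0 (((Finset.range (n + 1)).filter fun j => rowY dy j ≤ r).max)

/-- Index of the row block `x_k` containing row `r` (for `d_y ≤ r < d`). -/
def xRowIdx (n : ℕ) (dx dy : ℕ → ℕ) (r : ℕ) : ℕ :=
  WithTop.untopD 0 (((Finset.Icc 1 n).filter fun k => rowX n dx dy k ≤ r).min)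

/-- Index of the column block `x_k` containing column `c` (for `c < d_x`). -/
def xColIdx (n : ℕ) (dx : ℕ → ℕ) (c : ℕ) : ℕ :=
  WithTop.untopD 0 (((Finset.Icc 1 n).filter fun k => colX n dx k ≤ c).min)

/-- Index of the column block `y_j` containing column `c` (for `d_x ≤ c < d`). -/
def yColIdx (n : ℕ) (dx dy : ℕ → ℕ) (c : ℕ) : ℕ :=
  WithBot.unbotD 0 (((Finset.range (n + 1)).filter fun j => colY n dx dy j ≤ c).max)

variable {K : Type*}

/-- The variable attached to row `r` of the `d × d` grid: the concatenated alphabet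
`(𝐭, 𝐬) = (𝐭^0, …, 𝐭^n, 𝐬^n, …, 𝐬^1)`.  Here `t k i` is the variable `t^k_{i+1}`
and `s k j` is the variable `s^k_{j+1}`. -/
def rowVar [CommRing K] (n : ℕ) (dx dy : ℕ → ℕ) (t s : ℕ → ℕ → K) (r : ℕ) : K :=
  if r < dY n dy then t (yRowIdx n dy r) (r - rowY dy (yRowIdx n dy r))
  else s (xRowIdx n dx dy r) (r - rowX n dx dy (xRowIdx n dx dy r))

/-- The variable attached to column `c` of the `d × d` grid: the concatenated
alphabet `(𝐬, 𝐭) = (𝐬^n, …, 𝐬^1, 𝐭^0, …, 𝐭^n)`. -/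
def colVar [CommRing K] (n : ℕ) (dx dy : ℕ → ℕ) (t s : ℕ → ℕ → K) (c : ℕ) : K :=
  if c < dX n dx then s (xColIdx n dx c) (c - colX n dx (xColIdx n dx c))
  else t (yColIdx n dx dy c) (c - colY n dx dy (yColIdx n dx dy c))

/-- The double Schubert polynomial `𝔖_v(a; b)` (pipe dream formula, on a `k × l`
grid). -/
def schubert [CommRing K] (k l : ℕ) (v : Equiv.Perm ℕ) (a b : ℕ → K) : K :=
  ∑ P ∈ rpipesFin k l v, ∏ p ∈ P, (a p.1 - b p.2)

/-- The double Grothendieck polynomial `𝔊_v(a; b)` (pipe dream formula, on a `k × l`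
grid). -/
def grothendieck [Field K] (k l : ℕ) (v : Equiv.Perm ℕ) (a b : ℕ → K) : K :=
  ∑ P ∈ pipesFin k l v,
    (-1 : K) ^ ((P.card : ℤ) - (lenB (k + l) v : ℤ)) * ∏ p ∈ P, (1 - a p.1 / b p.2)

/-- `𝔖_𝐰(𝐭; 𝐬) = ∏_k 𝔖_{w_k}(𝐭^k; 𝐬^k) ⬝ ∏_k 𝔖_{rot(w^k)}(𝐭̃^{k-1}; 𝐬̃^k)` for a lacing
diagram `𝐰` (Schubert polynomials of partial permutations being those of their
minimal-length completions). -/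
def schubertLace [CommRing K] (n : ℕ) (dx dy : ℕ → ℕ) (w : LaceData)
    (t s : ℕ → ℕ → K) : K :=
  (∏ k ∈ Finset.Icc 1 n,
    schubert (dy k) (dx k) (completion (dy k) (dx k) (w.1 k))
      (fun i => t k i) (fun j => s k j)) *
  ∏ k ∈ Finset.Icc 1 n,
    schubert (dy (k - 1)) (dx k)
      (completion (dy (k - 1)) (dx k) (rotF (dy (k - 1)) (dx k) (w.2 k)))
      (fun i => t (k - 1) (dy (k - 1) - 1 - i)) (fun j => s k (dx k - 1 - j))

/-- `𝔊_𝐰(𝐭; 𝐬) = ∏_k 𝔊_{w_k}(𝐭^k; 𝐬^k) ⬝ ∏_k 𝔊_{rot(w^k)}(𝐭̃^{k-1}; 𝐬̃^k)`. -/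
def grothendieckLace [Field K] (n : ℕ) (dx dy : ℕ → ℕ) (w : LaceData)
    (t s : ℕ → ℕ → K) : K :=
  (∏ k ∈ Finset.Icc 1 n,
    grothendieck (dy k) (dx k) (completion (dy k) (dx k) (w.1 k))
      (fun i => t k i) (fun j => s k j)) *
  ∏ k ∈ Finset.Icc 1 n,
    grothendieck (dy (k - 1)) (dx k)
      (completion (dy (k - 1)) (dx k) (rotF (dy (k - 1)) (dx k) (w.2 k)))
      (fun i => t (k - 1) (dy (k - 1) - 1 - i)) (fun j => s k (dx k - 1 - j))

/-! ### Data for the Demazure-product factorization of the Zelevinsky permutation. -/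

/-- `ε^k`: Demazure product of the pipe dream with crosses at all positions strictly
north of the block `α_k`. -/
def epsA (n : ℕ) (dx dy : ℕ → ℕ) (k : ℕ) : Equiv.Perm ℕ :=
  demazure (dY n dy) (dX n dx)
    (Finset.range (rowY dy (k - 1)) ×ˢ Finset.Ico (colX n dx k) (colX n dx k + dx k))

/-- `ε_k`: Demazure product of the pipe dream with crosses at all positions strictly
south of the block `β_k` (inside the `d_y × d_x` grid). -/
def epsB (n : ℕ) (dx dy : ℕ → ℕ) (k : ℕ) : Equiv.Perm ℕ :=
  demazure (dY n dy) (dX n dx)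
    (Finset.Ico (rowY dy k + dy k) (dY n dy) ×ˢ Finset.Ico (colX n dx k) (colX n dx k + dx k))

/-- `θ^k`: Demazure product of the pipe dream with crosses at all positions strictly
west of the block `α_k`. -/
def thA (n : ℕ) (dx dy : ℕ → ℕ) (k : ℕ) : Equiv.Perm ℕ :=
  demazure (dY n dy) (dX n dx)
    (Finset.Ico (rowY dy (k - 1)) (rowY dy (k - 1) + dy (k - 1)) ×ˢ Finset.range (colX n dx k))

/-- `θ_k`: Demazure product of the pipe dream with crosses at all positions strictly
east of the block `β_k` (inside the `d_y × d_x` grid). -/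
def thB (n : ℕ) (dx dy : ℕ → ℕ) (k : ℕ) : Equiv.Perm ℕ :=
  demazure (dY n dy) (dX n dx)
    (Finset.Ico (rowY dy k) (rowY dy k + dy k) ×ˢ Finset.Ico (colX n dx k + dx k) (dX n dx))

/-- `a_k = Σ_{i>k} dx i + Σ_{i<k-1} dy i`. -/
def aOff (n : ℕ) (dx dy : ℕ → ℕ) (k : ℕ) : ℕ := colX n dx k + rowY dy (k - 1)

/-- `b_k = Σ_{i>k} dx i + Σ_{i<k} dy i`. -/
def bOff (n : ℕ) (dx dy : ℕ → ℕ) (k : ℕ) : ℕ := colX n dx k + rowY dy k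

/-- `w_k = 1^{b_k} × v_k`. -/
def wShB (n : ℕ) (dx dy : ℕ → ℕ) (x : SD) (k : ℕ) : Equiv.Perm ℕ :=
  shiftPerm (bOff n dx dy k) (x.1 k)

/-- `w^k = 1^{a_k} × rot((v^k)⁻¹)`. -/
def wShA (n : ℕ) (dx dy : ℕ → ℕ) (x : SD) (k : ℕ) : Equiv.Perm ℕ :=
  shiftPerm (aOff n dx dy k) (rotPerm (dy (k - 1) + dx k) (x.2 k)⁻¹)

/-- The factor list `(w^1 w_1 ε_1)(ε^2 w^2 w_2 ε_2) ⋯ (ε^n w^n w_n)` (the factors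
`ε^1` and `ε_n` being the identity). -/
def factorList2 (n : ℕ) (dx dy : ℕ → ℕ) (x : SD) : List (Equiv.Perm ℕ) :=
  ((List.range' 1 n).map fun k =>
    [epsA n dx dy k, wShA n dx dy x k, wShB n dx dy x k, epsB n dx dy k]).flatten

/-- The factor list `(w^1 θ^1)(w_1 w^2 θ^2)(θ_2 w_2 w^3 θ^3) ⋯ (θ_{n-1} w_{n-1} w^n)(θ_n w_n)`
(the factor `θ_1` being the identity). -/
def factorList3 (n : ℕ) (dx dy : ℕ → ℕ) (x : SD) : List (Equiv.Perm ℕ) :=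
  [wShA n dx dy x 1, thA n dx dy 1] ++
    ((List.range' 1 n).map fun k =>
      [thB n dx dy k, wShB n dx dy x k] ++
        (if k = n then [] else [wShA n dx dy x (k + 1), thA n dx dy (k + 1)])).flatten

end QP


namespace QP

/-- The domain of the pipe network map: tuples of pipe dreams
`(P_k ∈ Pipes(v_k), P^k ∈ Pipes(v^k))_k` for some `v ∈ X_Ω`. -/
def PNdomain (n : ℕ) (dx dy : ℕ → ℕ) (vZ : Equiv.Perm ℕ) : Set LaceData :=
  {T | (∀ k, k = 0 ∨ n < k → T.1 k = ∅ ∧ T.2 k = ∅) ∧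
    ∃ x ∈ XOmega n dx dy vZ, ∀ k, 1 ≤ k → k ≤ n →
      T.1 k ∈ pipesFin (dy k) (dx k) (x.1 k) ∧
      T.2 k ∈ pipesFin (dy (k - 1)) (dx k) (x.2 k)}

/-- The pipe network map `PN`: place `P_k` in the `β_k` block, `rot(P^k)` in the
`α_k` block, and crosses everywhere else in the northwest `d_y × d_x` subgrid. -/
def PNmap (n : ℕ) (dx dy : ℕ → ℕ) (T : LaceData) : Finset (ℕ × ℕ) :=
  Pstar n dx dy ∪ (Finset.Icc 1 n).biUnion fun k =>
    ((T.1 k).image fun p => (p.1 + rowY dy k, p.2 + colX n dx k)) ∪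
      ((rotF (dy (k - 1)) (dx k) (T.2 k)).image fun p =>
        (p.1 + rowY dy (k - 1), p.2 + colX n dx k))

/-!
In the 0-Hecke monoid, letters that differ by at least two commute. So the row reading word of
a pipe dream `P ⊇ P_*` in the northwest `d_y × d_x` grid regroups, block row by block row, into
the part east of the snake, the part in `β_k`, the part in `α_{k+1}` and the part west of the
snake. The middle parts are shifted copies of the words of `P_k` and `P^{k+1}`, so they contribute
`δ(P_k)` and `w₀ δ(rot P^{k+1})⁻¹ w₀`, while the outer parts consist of crosses of `P_*`. Hence
`δ(P)` only depends on `π(P)`: this puts the image of `PN` into `Pipes(v_0, v(Ω))`, and taking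
mini pipe dreams inverts `PN`.

It remains to see that every `P ∈ Pipes(v_0, v(Ω))` contains `P_*`. Conditions (Z1) and (Z2)
force zero blocks in `v(Ω)`: block row `y_k` avoids the column blocks `x_{k'}` with `k' > k + 1`,
and column block `y_m` avoids the row blocks `x_{k'}` with `k' < m`. The first bound makes
`δ(P)` send the start of each row of `y_k` far enough to force all crosses west of the snake;
the second, applied to the rotation of `P`, forces those east of it.
-/

/-! ### Demazure products of words -/

def hfold (u : Equiv.Perm ℕ) (l : List ℕ) : Equiv.Perm ℕ := l.foldl hstep u

@[simp] lemma hfold_nil (u : Equiv.Perm ℕ) : hfold u [] = u := rfl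

@[simp] lemma hfold_cons (u : Equiv.Perm ℕ) (a : ℕ) (l : List ℕ) :
    hfold u (a :: l) = hfold (hstep u a) l := rfl

lemma hfold_append (u : Equiv.Perm ℕ) (l₁ l₂ : List ℕ) :
    hfold u (l₁ ++ l₂) = hfold (hfold u l₁) l₂ := List.foldl_append ..

lemma hword_eq_hfold (l : List ℕ) : hword l = hfold 1 l := rfl

lemma hword_append (p q : List ℕ) : hword (p ++ q) = hfold (hword p) q :=
  hfold_append 1 p q

lemma hstep_of_lt {u : Equiv.Perm ℕ} {a : ℕ} (h : u a < u (a + 1)) :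
    hstep u a = u * Equiv.swap a (a + 1) := if_pos h

lemma hstep_of_not_lt {u : Equiv.Perm ℕ} {a : ℕ} (h : ¬ u a < u (a + 1)) :
    hstep u a = u := if_neg h

lemma mul_swap_succ_apply_of_ne (u : Equiv.Perm ℕ) {a x : ℕ} (h1 : x ≠ a) (h2 : x ≠ a + 1) :
    (u * Equiv.swap a (a + 1)) x = u x := by
  simp [Equiv.swap_apply_of_ne_of_ne h1 h2]

lemma hstep_apply_of_ne (u : Equiv.Perm ℕ) {a x : ℕ} (h1 : x ≠ a) (h2 : x ≠ a + 1) :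
    hstep u a x = u x := by
  unfold hstep
  split_ifs
  · exact mul_swap_succ_apply_of_ne u h1 h2
  · rfl

lemma hstep_hstep_comm (u : Equiv.Perm ℕ) {a b : ℕ} (h : a + 2 ≤ b ∨ b + 2 ≤ a) :
    hstep (hstep u a) b = hstep (hstep u b) a := by
  have hswap : Equiv.swap a (a + 1) * Equiv.swap b (b + 1)
      = Equiv.swap b (b + 1) * Equiv.swap a (a + 1) := by
    ext x
    simp only [Equiv.Perm.mul_apply, Equiv.swap_apply_def]
    split_ifs <;> omega
  have e₁ : hstep (hstep u a) b
      = if u b < u (b + 1) then hstep u a * Equiv.swap b (b + 1) else hstep u a := by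
    rw [hstep.eq_1 (hstep u a), hstep_apply_of_ne u (by omega) (by omega),
      hstep_apply_of_ne u (by omega) (by omega)]
  have e₂ : hstep (hstep u b) a
      = if u a < u (a + 1) then hstep u b * Equiv.swap a (a + 1) else hstep u b := by
    rw [hstep.eq_1 (hstep u b), hstep_apply_of_ne u (by omega) (by omega),
      hstep_apply_of_ne u (by omega) (by omega)]
  rw [e₁, e₂]
  unfold hstep
  split_ifs <;> simp only [mul_assoc, hswap]

lemma hfold_hstep_comm (u : Equiv.Perm ℕ) {a : ℕ} {l : List ℕ}
    (h : ∀ b ∈ l, a + 2 ≤ b ∨ b + 2 ≤ a) :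
    hfold (hstep u a) l = hfold u (l ++ [a]) := by
  induction l generalizing u with
  | nil => rfl
  | cons b l ih =>
    rw [List.cons_append, hfold_cons, hfold_cons, ← ih _ (fun x hx => h x (by simp [hx])),
      hstep_hstep_comm u (h b (by simp))]

lemma hfold_append_comm (u : Equiv.Perm ℕ) {l₁ l₂ : List ℕ}
    (h : ∀ a ∈ l₁, ∀ b ∈ l₂, a + 2 ≤ b ∨ b + 2 ≤ a) :
    hfold u (l₁ ++ l₂) = hfold u (l₂ ++ l₁) := by
  induction l₁ generalizing u with
  | nil => simp
  | cons a l₁ ih =>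
    rw [List.cons_append, hfold_cons, ih _ (fun x hx => h x (List.mem_cons_of_mem a hx)),
      hfold_append, hfold_hstep_comm _ (h a (by simp)), ← hfold_append, List.append_assoc,
      List.singleton_append]

def lstep (a : ℕ) (u : Equiv.Perm ℕ) : Equiv.Perm ℕ :=
  if u.symm a < u.symm (a + 1) then Equiv.swap a (a + 1) * u else u

lemma lstep_of_lt {u : Equiv.Perm ℕ} {a : ℕ} (h : u.symm a < u.symm (a + 1)) :
    lstep a u = Equiv.swap a (a + 1) * u := if_pos h

lemma lstep_of_not_lt {u : Equiv.Perm ℕ} {a : ℕ} (h : ¬ u.symm a < u.symm (a + 1)) :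
    lstep a u = u := if_neg h

lemma swap_succ_lt_swap_succ_iff {a x y : ℕ} (h₁ : ¬ (x = a ∧ y = a + 1))
    (h₂ : ¬ (x = a + 1 ∧ y = a)) :
    Equiv.swap a (a + 1) x < Equiv.swap a (a + 1) y ↔ x < y := by
  simp only [Equiv.swap_apply_def]
  split_ifs <;> omega

lemma hstep_lstep_comm (a b : ℕ) (u : Equiv.Perm ℕ) :
    hstep (lstep a u) b = lstep a (hstep u b) := by
  have hsymm : ∀ x, (u * Equiv.swap b (b + 1)).symm x = Equiv.swap b (b + 1) (u.symm x) :=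
    fun _ => rfl
  by_cases hup : u b = a ∧ u (b + 1) = a + 1
  · have hinv : u.symm a = b ∧ u.symm (a + 1) = b + 1 :=
      ⟨by rw [← hup.1, Equiv.symm_apply_apply], by rw [← hup.2, Equiv.symm_apply_apply]⟩
    have hcross : Equiv.swap a (a + 1) * u = u * Equiv.swap b (b + 1) := by
      rw [Equiv.mul_swap_eq_swap_mul, hup.1, hup.2]
    rw [lstep_of_lt (u := u) (by omega), hstep_of_lt (u := u) (by omega),
      hstep_of_not_lt (by simp [hup]), lstep_of_not_lt (by simp [hsymm, hinv]), hcross]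
  by_cases hdown : u b = a + 1 ∧ u (b + 1) = a
  · have hinv : u.symm a = b + 1 ∧ u.symm (a + 1) = b := by
      rw [← hdown.1, ← hdown.2]; simp
    rw [lstep_of_not_lt (by omega), hstep_of_not_lt (by omega), lstep_of_not_lt (by omega)]
  have hR : (Equiv.swap a (a + 1) * u) b < (Equiv.swap a (a + 1) * u) (b + 1) ↔
      u b < u (b + 1) := swap_succ_lt_swap_succ_iff hup hdown
  have hL : (u * Equiv.swap b (b + 1)).symm a < (u * Equiv.swap b (b + 1)).symm (a + 1) ↔
      u.symm a < u.symm (a + 1) := by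
    rw [hsymm, hsymm]
    refine swap_succ_lt_swap_succ_iff (fun h => hup ?_) (fun h => hdown ?_)
    · exact ⟨(u.symm_apply_eq.mp h.1).symm, (u.symm_apply_eq.mp h.2).symm⟩
    · exact ⟨(u.symm_apply_eq.mp h.2).symm, (u.symm_apply_eq.mp h.1).symm⟩
  by_cases hu : u b < u (b + 1) <;> by_cases hv : u.symm a < u.symm (a + 1)
  · rw [hstep_of_lt hu, lstep_of_lt hv, lstep_of_lt (hL.mpr hv), hstep_of_lt (hR.mpr hu),
      mul_assoc]
  · rw [hstep_of_lt hu, lstep_of_not_lt hv, lstep_of_not_lt (mt hL.mp hv), hstep_of_lt hu]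
  · rw [hstep_of_not_lt hu, lstep_of_lt hv, hstep_of_not_lt (mt hR.mp hu)]
  · rw [hstep_of_not_lt hu, lstep_of_not_lt hv, hstep_of_not_lt hu]

lemma hword_cons (a : ℕ) (l : List ℕ) : hword (a :: l) = lstep a (hword l) := by
  induction l using List.reverseRecOn with
  | nil =>
    show hstep 1 a = lstep a 1
    rw [hstep_of_lt (Nat.lt_succ_self a), lstep_of_lt (Nat.lt_succ_self a), one_mul, mul_one]
  | append_singleton l b ih =>
    rw [← List.cons_append, hword_append, hword_append, hfold_cons, hfold_nil, hfold_cons,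
      hfold_nil, ih, hstep_lstep_comm]

lemma hword_reverse (l : List ℕ) : hword l.reverse = (hword l)⁻¹ := by
  induction l with
  | nil => rfl
  | cons a l ih =>
    rw [List.reverse_cons, hword_append, ih, hword_cons, hfold_cons, hfold_nil]
    unfold hstep lstep
    split_ifs with h₁ h₂ h₂
    · rw [mul_inv_rev, Equiv.swap_inv]
    · exact absurd h₁ h₂
    · exact absurd h₂ h₁
    · rfl

lemma hword_append_left_congr {l l' : List ℕ} (x : List ℕ) (h : hword l = hword l') :
    hword (x ++ l) = hword (x ++ l') := by
  have key : ∀ y, hword (x ++ y) = (hfold (hword y)⁻¹ x.reverse)⁻¹ := fun y => by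
    rw [← hword_reverse, ← hword_append, ← List.reverse_append, hword_reverse, inv_inv]
  rw [key, key, h]

lemma hword_append_congr {l₁ l₁' l₂ l₂' : List ℕ} (h₁ : hword l₁ = hword l₁')
    (h₂ : hword l₂ = hword l₂') : hword (l₁ ++ l₂) = hword (l₁' ++ l₂') := by
  rw [hword_append, h₁, ← hword_append, hword_append_left_congr l₁' h₂]

lemma hfold_apply_of_forall_lt (l : List ℕ) (u : Equiv.Perm ℕ) {x : ℕ} (h : ∀ a ∈ l, x < a) :
    hfold u l x = u x := by
  induction l generalizing u with
  | nil => rfl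
  | cons a l ih =>
    have hx := h a (by simp)
    rw [hfold_cons, ih _ (fun b hb => h b (by simp [hb])),
      hstep_apply_of_ne u (by omega) (by omega)]

lemma hfold_apply_of_forall_gt (l : List ℕ) (u : Equiv.Perm ℕ) {x : ℕ}
    (h : ∀ a ∈ l, a + 1 < x) : hfold u l x = u x := by
  induction l generalizing u with
  | nil => rfl
  | cons a l ih =>
    have hx := h a (by simp)
    rw [hfold_cons, ih _ (fun b hb => h b (by simp [hb])),
      hstep_apply_of_ne u (by omega) (by omega)]

lemma hfold_apply_of_forall_le {l : List ℕ} {g : ℕ} (hl : ∀ a ∈ l, g ≤ a) {u : Equiv.Perm ℕ}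
    (hu : ∀ y < g, u y = y) {x : ℕ} (hx : x < g) : hfold u l x = x := by
  induction l generalizing u with
  | nil => exact hu x hx
  | cons a l ih =>
    have ha := hl a (by simp)
    refine ih (fun b hb => hl b (by simp [hb])) fun y hy => ?_
    rw [hstep_apply_of_ne u (by omega) (by omega), hu y hy]

lemma shiftPerm_apply (p : ℕ) (v : Equiv.Perm ℕ) (i : ℕ) :
    shiftPerm p v i = if i < p then i else v (i - p) + p := rfl

lemma shiftPerm_one (p : ℕ) : shiftPerm p 1 = 1 := by
  ext i
  simp only [shiftPerm_apply, Equiv.Perm.one_apply]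
  split_ifs <;> omega

lemma shiftPerm_mul (p : ℕ) (u v : Equiv.Perm ℕ) :
    shiftPerm p (u * v) = shiftPerm p u * shiftPerm p v := by
  ext i
  simp only [Equiv.Perm.mul_apply, shiftPerm_apply]
  split_ifs
  · rfl
  · omega
  · rw [Nat.add_sub_cancel]

lemma shiftPerm_swap (p a : ℕ) :
    shiftPerm p (Equiv.swap a (a + 1)) = Equiv.swap (a + p) (a + p + 1) := by
  ext i
  simp only [shiftPerm_apply, Equiv.swap_apply_def]
  split_ifs <;> omega

lemma hstep_shiftPerm (p a : ℕ) (u : Equiv.Perm ℕ) :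
    hstep (shiftPerm p u) (a + p) = shiftPerm p (hstep u a) := by
  have e₁ : shiftPerm p u (a + p) = u a + p := by
    rw [shiftPerm_apply, if_neg (by omega), Nat.add_sub_cancel]
  have e₂ : shiftPerm p u (a + p + 1) = u (a + 1) + p := by
    rw [shiftPerm_apply, if_neg (by omega), Nat.add_right_comm, Nat.add_sub_cancel]
  by_cases h : u a < u (a + 1)
  · rw [hstep_of_lt (by rw [e₁, e₂]; omega), hstep_of_lt h, shiftPerm_mul, shiftPerm_swap]
  · rw [hstep_of_not_lt (by rw [e₁, e₂]; omega), hstep_of_not_lt h]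

lemma hword_map_add (p : ℕ) (l : List ℕ) :
    hword (l.map (· + p)) = shiftPerm p (hword l) := by
  suffices ∀ u, hfold (shiftPerm p u) (l.map (· + p)) = shiftPerm p (hfold u l) by
    rw [hword_eq_hfold, hword_eq_hfold, ← this, shiftPerm_one]
  induction l with
  | nil => exact fun _ => rfl
  | cons a l ih => exact fun u => by rw [List.map_cons, hfold_cons, hfold_cons, hstep_shiftPerm, ih]

lemma w0p_apply (m x : ℕ) : w0p m x = if x < m then m - 1 - x else x := rfl

lemma w0p_mul_self (m : ℕ) : w0p m * w0p m = 1 := by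
  ext x
  simp only [Equiv.Perm.mul_apply, w0p_apply, Equiv.Perm.one_apply]
  split_ifs <;> omega

lemma w0p_inv (m : ℕ) : (w0p m)⁻¹ = w0p m :=
  inv_eq_of_mul_eq_one_right (w0p_mul_self m)

lemma w0p_mul_swap_mul_w0p (m a : ℕ) (h : a + 2 ≤ m) :
    w0p m * Equiv.swap a (a + 1) * w0p m = Equiv.swap (m - 2 - a) (m - 2 - a + 1) := by
  ext x
  simp only [Equiv.Perm.mul_apply, w0p_apply, Equiv.swap_apply_def]
  split_ifs <;> omega

def MapsBelow (m : ℕ) (u : Equiv.Perm ℕ) : Prop := ∀ x < m, u x < m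

lemma MapsBelow.hstep {m a : ℕ} {u : Equiv.Perm ℕ} (hu : MapsBelow m u) (ha : a + 2 ≤ m) :
    MapsBelow m (hstep u a) := by
  intro x hx
  unfold QP.hstep
  split_ifs
  · simp only [Equiv.Perm.mul_apply, Equiv.swap_apply_def]
    split_ifs <;> exact hu _ (by omega)
  · exact hu x hx

lemma hstep_conj_w0p {m a : ℕ} (h : a + 2 ≤ m) {u : Equiv.Perm ℕ} (hu : MapsBelow m u) :
    hstep (w0p m * u * w0p m) (m - 2 - a) = w0p m * hstep u a * w0p m := by
  have hua := hu a (by omega)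
  have hua₁ := hu (a + 1) (by omega)
  have e₁ : (w0p m * u * w0p m) (m - 2 - a) = m - 1 - u (a + 1) := by
    rw [Equiv.Perm.mul_apply, Equiv.Perm.mul_apply, w0p_apply m (m - 2 - a), if_pos (by omega),
      show m - 1 - (m - 2 - a) = a + 1 by omega, w0p_apply, if_pos hua₁]
  have e₂ : (w0p m * u * w0p m) (m - 2 - a + 1) = m - 1 - u a := by
    rw [Equiv.Perm.mul_apply, Equiv.Perm.mul_apply, w0p_apply m (m - 2 - a + 1),
      if_pos (by omega), show m - 1 - (m - 2 - a + 1) = a by omega, w0p_apply, if_pos hua]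
  have hne : u a ≠ u (a + 1) := fun hc => absurd (u.injective hc) (by omega)
  by_cases hc : u a < u (a + 1)
  · rw [hstep_of_lt (by rw [e₁, e₂]; omega), hstep_of_lt hc, ← w0p_mul_swap_mul_w0p m a h]
    simp only [mul_assoc, ← mul_assoc (w0p m) (w0p m), w0p_mul_self, one_mul]
  · rw [hstep_of_not_lt (by rw [e₁, e₂]; omega), hstep_of_not_lt hc]

lemma hword_map_tsub {m : ℕ} {l : List ℕ} (hl : ∀ a ∈ l, a + 2 ≤ m) :
    hword (l.map (m - 2 - ·)) = w0p m * hword l * w0p m := by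
  suffices ∀ u, MapsBelow m u →
      hfold (w0p m * u * w0p m) (l.map (m - 2 - ·)) = w0p m * hfold u l * w0p m by
    rw [hword_eq_hfold, hword_eq_hfold, ← this 1 fun x hx => hx, mul_one, w0p_mul_self]
  induction l with
  | nil => exact fun _ _ => rfl
  | cons a l ih =>
    intro u hu
    have ha := hl a (by simp)
    rw [List.map_cons, hfold_cons, hfold_cons, hstep_conj_w0p ha hu,
      ih (fun b hb => hl b (by simp [hb])) _ (hu.hstep ha)]

def descRun (b t : ℕ) : List ℕ := (List.range t).reverse.map (· + b)

lemma descRun_succ (b t : ℕ) : descRun b (t + 1) = (b + t) :: descRun b t := by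
  simp [descRun, List.range_succ, Nat.add_comm]

lemma mem_descRun {b t x : ℕ} (h : x ∈ descRun b t) : b ≤ x ∧ x < b + t := by
  simp only [descRun, List.mem_map, List.mem_reverse, List.mem_range] at h
  obtain ⟨j, hj, rfl⟩ := h
  omega

lemma hfold_descRun_apply (t : ℕ) (v : Equiv.Perm ℕ) (b : ℕ)
    (h : ∀ j < t, v (b + j) < v (b + t)) :
    hfold v (descRun b t) b = v (b + t) ∧
      ∀ j < t, hfold v (descRun b t) (b + 1 + j) = v (b + j) := by
  induction t generalizing v with
  | zero => simp [descRun]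
  | succ t ih =>
    rw [descRun_succ, hfold_cons, hstep_of_lt (h t (by omega))]
    set v₁ := v * Equiv.swap (b + t) (b + t + 1)
    have hv₁ : ∀ j < t, v₁ (b + j) = v (b + j) := fun j hj =>
      mul_swap_succ_apply_of_ne v (by omega) (by omega)
    have hv₁t : v₁ (b + t) = v (b + (t + 1)) := by simp [v₁, Nat.add_assoc]
    have ih' := ih v₁ fun j hj => by rw [hv₁ j hj, hv₁t]; exact h j (by omega)
    refine ⟨by rw [ih'.1, hv₁t], fun j hj => ?_⟩
    rcases Nat.lt_or_ge j t with hjt | hjt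
    · rw [ih'.2 j hjt, hv₁ j hjt]
    · obtain rfl : j = t := by omega
      rw [hfold_apply_of_forall_gt _ _ fun a ha => by have := mem_descRun ha; omega]
      simp [v₁, Nat.add_right_comm b 1]

/-! ### Reading words and forced crosses -/

def rowWord (P : Finset (ℕ × ℕ)) (r a b : ℕ) : List ℕ :=
  (List.range' a (b - a)).reverse.filterMap fun j => if (r, j) ∈ P then some (r + j) else none

def rectWord (P : Finset (ℕ × ℕ)) (r₀ h a b : ℕ) : List ℕ :=
  (List.range' r₀ h).flatMap fun r => rowWord P r a b

lemma pipeWord_eq_rectWord (K L : ℕ) (P : Finset (ℕ × ℕ)) :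
    pipeWord K L P = rectWord P 0 K 0 L := by
  simp only [pipeWord, rectWord, rowWord, List.range_eq_range', Nat.sub_zero]

lemma mem_rowWord {P : Finset (ℕ × ℕ)} {r a b x : ℕ} (h : x ∈ rowWord P r a b) :
    ∃ j, (r, j) ∈ P ∧ a ≤ j ∧ j < b ∧ x = r + j := by
  simp only [rowWord, List.mem_filterMap, List.mem_reverse, List.mem_range'_1] at h
  obtain ⟨j, hj, hx⟩ := h
  split_ifs at hx with hm
  · exact ⟨j, hm, hj.1, by omega, (Option.some_inj.mp hx).symm⟩

lemma mem_rectWord {P : Finset (ℕ × ℕ)} {r₀ h a b x : ℕ} (hx : x ∈ rectWord P r₀ h a b) :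
    ∃ i j, (i, j) ∈ P ∧ r₀ ≤ i ∧ i < r₀ + h ∧ a ≤ j ∧ j < b ∧ x = i + j := by
  simp only [rectWord, List.mem_flatMap, List.mem_range'_1] at hx
  obtain ⟨i, hi, hx⟩ := hx
  obtain ⟨j, hj, hj₁, hj₂, rfl⟩ := mem_rowWord hx
  exact ⟨i, j, hj, hi.1, hi.2, hj₁, hj₂, rfl⟩

lemma mem_pipeWord {K L : ℕ} {P : Finset (ℕ × ℕ)} {x : ℕ} (h : x ∈ pipeWord K L P) :
    ∃ i j, (i, j) ∈ P ∧ x = i + j := by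
  rw [pipeWord_eq_rectWord] at h
  obtain ⟨i, j, hij, -, -, -, -, rfl⟩ := mem_rectWord h
  exact ⟨i, j, hij, rfl⟩

lemma rowWord_split (P : Finset (ℕ × ℕ)) (r : ℕ) {a b c : ℕ} (hab : a ≤ b) (hbc : b ≤ c) :
    rowWord P r a c = rowWord P r b c ++ rowWord P r a b := by
  have e : List.range' a (c - a) = List.range' a (b - a) ++ List.range' b (c - b) := by
    rw [show c - a = b - a + (c - b) by omega, ← List.range'_append_1,
      show a + (b - a) = b by omega]
  simp only [rowWord, e, List.reverse_append, List.filterMap_append]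

lemma rowWord_eq_nil (P : Finset (ℕ × ℕ)) (r a b : ℕ) (h : ∀ j, a ≤ j → j < b → (r, j) ∉ P) :
    rowWord P r a b = [] := by
  rw [rowWord, List.filterMap_eq_nil_iff]
  intro j hj
  rw [List.mem_reverse, List.mem_range'_1] at hj
  rw [if_neg (h j hj.1 (by omega))]

lemma rowWord_succ (P : Finset (ℕ × ℕ)) (r u : ℕ) :
    rowWord P r u (u + 1) = if (r, u) ∈ P then [r + u] else [] := by
  simp only [rowWord, Nat.add_sub_cancel_left, List.range'_one, List.reverse_singleton,
    List.filterMap_cons, List.filterMap_nil]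
  split_ifs <;> rfl

lemma rowWord_eq_descRun (P : Finset (ℕ × ℕ)) (r : ℕ) {a b : ℕ} (hab : a ≤ b)
    (h : ∀ j, a ≤ j → j < b → (r, j) ∈ P) : rowWord P r a b = descRun (r + a) (b - a) := by
  obtain ⟨t, rfl⟩ := Nat.exists_eq_add_of_le hab
  induction t with
  | zero => simp [rowWord_eq_nil P r a a (by omega), descRun]
  | succ t ih =>
    rw [rowWord_split P r (Nat.le_add_right a t) (by omega), ← Nat.add_assoc, rowWord_succ,
      if_pos (h (a + t) (by omega) (by omega)), ih (by omega) fun j h₁ h₂ => h j h₁ (by omega),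
      show a + t + 1 - a = t + 1 by omega, descRun_succ, Nat.add_assoc, Nat.add_sub_cancel_left]
    rfl

lemma rectWord_add (P : Finset (ℕ × ℕ)) (r₀ h h' a b : ℕ) :
    rectWord P r₀ (h + h') a b = rectWord P r₀ h a b ++ rectWord P (r₀ + h) h' a b := by
  simp only [rectWord, ← List.range'_append_1, List.flatMap_append]

lemma rectWord_succ (P : Finset (ℕ × ℕ)) (r₀ h a b : ℕ) :
    rectWord P r₀ (h + 1) a b = rectWord P r₀ h a b ++ rowWord P (r₀ + h) a b := by
  rw [rectWord_add]
  simp [rectWord]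

lemma rectWord_eq_nil (P : Finset (ℕ × ℕ)) (r₀ h a b : ℕ)
    (hP : ∀ i j, r₀ ≤ i → i < r₀ + h → a ≤ j → j < b → (i, j) ∉ P) :
    rectWord P r₀ h a b = [] :=
  List.flatMap_eq_nil_iff.mpr fun i hi => rowWord_eq_nil P i a b fun j hj₁ hj₂ =>
    hP i j (List.mem_range'_1.mp hi).1 (List.mem_range'_1.mp hi).2 hj₁ hj₂

section Forcing

variable {P : Finset (ℕ × ℕ)}

/-- A first missing cross at column `t` of row `s` makes the row send `s + g` to `R + (t - g)`. -/
lemma mem_of_le_hfold_rowWord (v : Equiv.Perm ℕ) {s g c L R : ℕ} (hcL : c ≤ L)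
    (hv : ∀ j < c - g, v (s + g + j) = R + j)
    (hle : R + (c - g) ≤ hfold v (rowWord P s g L) (s + g)) :
    ∀ j, g ≤ j → j < c → (s, j) ∈ P := by
  by_contra! hgap
  set t := Nat.find hgap
  obtain ⟨hgt, htc, ht⟩ : g ≤ t ∧ t < c ∧ (s, t) ∉ P := Nat.find_spec hgap
  have hrow : ∀ j, g ≤ j → j < t → (s, j) ∈ P := fun j h₁ h₂ => by
    by_contra hj
    exact Nat.find_min hgap h₂ ⟨h₁, by omega, hj⟩
  have hsplit : rowWord P s g L = rowWord P s (t + 1) L ++ descRun (s + g) (t - g) := by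
    rw [rowWord_split P s (show g ≤ t + 1 by omega) (by omega),
      rowWord_split P s hgt (Nat.le_succ t), rowWord_succ, if_neg ht, List.nil_append,
      rowWord_eq_descRun P s hgt hrow]
  set v' := hfold v (rowWord P s (t + 1) L)
  have hv' : ∀ j ≤ t - g, v' (s + g + j) = R + j := by
    intro j hj
    rw [hfold_apply_of_forall_lt _ _ fun a ha => ?_, hv j (by omega)]
    obtain ⟨j', -, hj', -, rfl⟩ := mem_rowWord ha
    omega
  have hrun := hfold_descRun_apply (t - g) v' (s + g) fun j hj => by
    rw [hv' j hj.le, hv' (t - g) le_rfl]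
    omega
  rw [hsplit, hfold_append, hrun.1, hv' _ le_rfl] at hle
  omega

lemma hfold_rowWord_apply_of_forall_mem (v : Equiv.Perm ℕ) {s g c L R : ℕ} (hgc : g ≤ c)
    (hcL : c ≤ L) (hRs : R ≤ s + g) (hrow : ∀ j, g ≤ j → j < c → (s, j) ∈ P)
    (hv : ∀ j < c - g, v (s + g + j) = R + j) (hfix : ∀ x < R, v x = x) :
    ∀ j < c - g, hfold v (rowWord P s g L) (s + 1 + g + j) = R + j := by
  have hsplit : rowWord P s g L = rowWord P s c L ++ descRun (s + g) (c - g) := by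
    rw [rowWord_split P s hgc hcL, rowWord_eq_descRun P s hgc hrow]
  set v' := hfold v (rowWord P s c L)
  have hletters : ∀ a ∈ rowWord P s c L, s + c ≤ a := fun a ha => by
    obtain ⟨j, -, hj, -, rfl⟩ := mem_rowWord ha
    omega
  have hv' : ∀ j < c - g, v' (s + g + j) = R + j := fun j hj => by
    rw [hfold_apply_of_forall_lt _ _ fun a ha => by have := hletters a ha; omega, hv j hj]
  have hfix' : ∀ x < R, v' x = x := fun x hx =>
    hfold_apply_of_forall_le (fun a ha => by have := hletters a ha; omega) hfix hx
  -- the values below `R + (c - g)` are already taken at other positions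
  have hbig : R + (c - g) ≤ v' (s + c) := by
    by_contra hlt
    rcases Nat.lt_or_ge (v' (s + c)) R with hlow | hmid
    · have := v'.injective (hfix' _ hlow)
      omega
    · have h := hv' (v' (s + c) - R) (by omega)
      rw [show R + (v' (s + c) - R) = v' (s + c) by omega] at h
      have := v'.injective h
      omega
  have hrun := hfold_descRun_apply (c - g) v' (s + g) fun j hj => by
    rw [hv' j hj, show s + g + (c - g) = s + c by omega]
    omega
  intro j hj
  rw [hsplit, hfold_append, show s + 1 + g + j = s + g + 1 + j by omega, hrun.2 j hj, hv' j hj]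

lemma demazure_apply_eq_hword_rectWord {K L s g : ℕ} (hP : ∀ p ∈ P, g ≤ p.2) (hs : s < K) :
    demazure K L P (s + g) = hword (rectWord P 0 (s + 1) 0 L) (s + g) := by
  rw [demazure, pipeWord_eq_rectWord, show K = s + 1 + (K - (s + 1)) by omega, rectWord_add,
    hword_append]
  refine hfold_apply_of_forall_lt _ _ fun a ha => ?_
  obtain ⟨i, j, hij, hi, -, -, -, rfl⟩ := mem_rectWord ha
  have := hP _ hij
  omega

lemma hword_rectWord_succ {s g L : ℕ} (hgL : g ≤ L) (hrow : ∀ j < g, (s, j) ∉ P) :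
    hword (rectWord P 0 (s + 1) 0 L) = hfold (hword (rectWord P 0 s 0 L)) (rowWord P s g L) := by
  rw [rectWord_succ, hword_append, Nat.zero_add, rowWord_split P s (Nat.zero_le g) hgL,
    rowWord_eq_nil P s 0 g fun j _ hj => hrow j hj, List.append_nil]

lemma hword_rectWord_apply_of_lt {R h L x : ℕ} (hP : ∀ p ∈ P, R ≤ p.1 + p.2) (hx : x < R) :
    hword (rectWord P 0 h 0 L) x = x :=
  hfold_apply_of_forall_le (fun a ha => by
    obtain ⟨i, j, hij, -, -, -, -, rfl⟩ := mem_rectWord ha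
    exact hP _ hij) (fun _ _ => rfl) hx

/-- By induction on `s`, the rows above `s` send `s + g + j` to `R₀ + g + j` for `g + j < c s`;
a missing cross in row `s` before column `c s` would then send `s + g` below `R₀ + c s`. -/
theorem mem_of_le_demazure_apply {K L R₀ R₁ g : ℕ} {c : ℕ → ℕ}
    (hP : ∀ p ∈ P, (R₀ ≤ p.1 ∧ p.1 < R₁) ∧ (g ≤ p.2 ∧ p.2 < L)) (hR₁ : R₁ ≤ K)
    (hmono : ∀ s s', R₀ ≤ s → s ≤ s' → s' < R₁ → c s' ≤ c s)
    (hcL : ∀ s, R₀ ≤ s → s < R₁ → g ≤ c s ∧ c s ≤ L)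
    (hval : ∀ s, R₀ ≤ s → s < R₁ → R₀ + c s ≤ demazure K L P (s + g)) :
    ∀ s j, R₀ ≤ s → s < R₁ → g ≤ j → j < c s → (s, j) ∈ P := by
  set u : ℕ → Equiv.Perm ℕ := fun s => hword (rectWord P 0 s 0 L)
  have hu_succ : ∀ s, R₀ ≤ s → s < R₁ → u (s + 1) = hfold (u s) (rowWord P s g L) :=
    fun s hs₀ hs₁ => hword_rectWord_succ ((hcL s hs₀ hs₁).1.trans (hcL s hs₀ hs₁).2)
      fun j hj hmem => by have := (hP _ hmem).2.1; omega
  have hfix : ∀ s, ∀ x < R₀ + g, u s x = x := fun s x hx =>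
    hword_rectWord_apply_of_lt (fun p hp => by have := hP p hp; omega) hx
  have hrow : ∀ s, R₀ ≤ s → s < R₁ → (∀ j < c s - g, u s (s + g + j) = R₀ + g + j) →
      ∀ j, g ≤ j → j < c s → (s, j) ∈ P := fun s hs₀ hs₁ hinv =>
    mem_of_le_hfold_rowWord (u s) (hcL s hs₀ hs₁).2 hinv (by
      have h₁ := hval s hs₀ hs₁
      have h₂ := (hcL s hs₀ hs₁).1
      rw [demazure_apply_eq_hword_rectWord (fun p hp => (hP p hp).2.1) (by omega)] at h₁
      change R₀ + c s ≤ u (s + 1) (s + g) at h₁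
      rw [hu_succ s hs₀ hs₁] at h₁
      omega)
  have hinv : ∀ d, R₀ + d < R₁ → ∀ j < c (R₀ + d) - g,
      u (R₀ + d) (R₀ + d + g + j) = R₀ + g + j := by
    intro d
    induction d with
    | zero =>
      intro _ j _
      have hu : u R₀ = 1 := by
        simp only [u]
        rw [rectWord_eq_nil P 0 R₀ 0 L fun i j _ hi _ _ hij => by have := (hP _ hij).1.1; omega]
        rfl
      rw [Nat.add_zero, hu, Equiv.Perm.one_apply]
    | succ d ih =>
      intro hd j hj
      set s := R₀ + d
      have hs : R₀ ≤ s ∧ s < R₁ := ⟨by omega, by omega⟩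
      have hc := hcL s hs.1 hs.2
      have hcs := hmono s (s + 1) hs.1 (by omega) hd
      rw [show R₀ + (d + 1) = s + 1 by omega] at hj ⊢
      rw [hu_succ s hs.1 hs.2]
      exact hfold_rowWord_apply_of_forall_mem (u s) hc.1 hc.2 (by omega)
        (hrow s hs.1 hs.2 (ih (by omega))) (ih (by omega)) (hfix s) j (by omega)
  intro s j hs₀ hs₁
  have := hinv (s - R₀) (by omega)
  rw [Nat.add_sub_cancel' hs₀] at this
  exact hrow s hs₀ hs₁ this j

end Forcing

/-! ### Block geometry and the zero blocks of the Zelevinsky permutation -/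

section Blocks

variable (n : ℕ) (dx dy : ℕ → ℕ)

lemma colX_antitone {k k' : ℕ} (h : k ≤ k') : colX n dx k' ≤ colX n dx k :=
  Finset.sum_le_sum_of_subset fun a ha => by
    rw [Finset.mem_Icc] at ha ⊢
    omega

lemma colX_eq_add {k : ℕ} (h : k < n) : colX n dx k = dx (k + 1) + colX n dx (k + 1) := by
  rw [colX, ← Finset.add_sum_Ioc_eq_sum_Icc (by omega), colX]
  congr 2
  ext
  simp only [Finset.mem_Ioc, Finset.mem_Icc]
  omega

lemma colX_add_dx {k : ℕ} (hk₁ : 1 ≤ k) (hk₂ : k ≤ n) :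
    colX n dx k + dx k = colX n dx (k - 1) := by
  rw [colX_eq_add n dx (k := k - 1) (by omega), Nat.sub_add_cancel hk₁, Nat.add_comm]

lemma colX_zero : colX n dx 0 = dX n dx := rfl

lemma colX_of_le {k : ℕ} (h : n ≤ k) : colX n dx k = 0 := by
  rw [colX, Finset.Icc_eq_empty (by omega), Finset.sum_empty]

lemma colX_le_dX (k : ℕ) : colX n dx k ≤ dX n dx := colX_antitone n dx (Nat.zero_le k)

lemma rowY_succ (j : ℕ) : rowY dy (j + 1) = rowY dy j + dy j := Finset.sum_range_succ _ _

lemma rowY_mono {j j' : ℕ} (h : j ≤ j') : rowY dy j ≤ rowY dy j' :=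
  Finset.sum_le_sum_of_subset (Finset.range_subset_range.mpr h)

lemma rowY_add_le {j : ℕ} (h : j ≤ n) : rowY dy j + dy j ≤ dY n dy := by
  rw [← rowY_succ]
  exact rowY_mono dy (Nat.succ_le_succ h)

lemma colX_add_dx_le {k : ℕ} (hk₁ : 1 ≤ k) (hk₂ : k ≤ n) : colX n dx k + dx k ≤ dX n dx := by
  rw [colX_add_dx n dx hk₁ hk₂]
  exact colX_le_dX n dx _

lemma exists_rowY_le_lt {r : ℕ} (hr : r < dY n dy) :
    ∃ k ≤ n, rowY dy k ≤ r ∧ r < rowY dy k + dy k := by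
  have hex : ∃ k, r < rowY dy (k + 1) := ⟨n, hr⟩
  refine ⟨Nat.find hex, Nat.find_min' hex hr, ?_, (rowY_succ dy _).symm ▸ Nat.find_spec hex⟩
  rcases Nat.eq_zero_or_eq_succ_pred (Nat.find hex) with h | h
  · rw [h]
    exact Nat.zero_le r
  · rw [h]
    exact not_lt.mp (Nat.find_min hex (by omega))

lemma exists_colX_le_lt {c : ℕ} (hc : c < dX n dx) :
    ∃ k, 1 ≤ k ∧ k ≤ n ∧ colX n dx k ≤ c ∧ c < colX n dx k + dx k := by
  have hn : 1 ≤ n := by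
    by_contra! h
    obtain rfl : n = 0 := by omega
    simp [dX] at hc
  have hex : ∃ k, colX n dx k ≤ c := ⟨n, by rw [colX_of_le n dx le_rfl]; exact Nat.zero_le c⟩
  have h₀ : 1 ≤ Nat.find hex := Nat.one_le_iff_ne_zero.mpr fun h => by
    have := Nat.find_spec hex
    rw [h, colX_zero] at this
    omega
  have hle : Nat.find hex ≤ n := Nat.find_min' hex (by rw [colX_of_le n dx le_rfl]; omega)
  refine ⟨Nat.find hex, h₀, hle, Nat.find_spec hex, ?_⟩
  rw [colX_add_dx n dx h₀ hle]
  exact not_le.mp (Nat.find_min hex (by omega))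

lemma yRowIdx_eq {r k : ℕ} (hk : k ≤ n) (h₁ : rowY dy k ≤ r) (h₂ : r < rowY dy k + dy k) :
    yRowIdx n dy r = k := by
  have hmem : k ∈ (Finset.range (n + 1)).filter fun j => rowY dy j ≤ r := by simp [hk, h₁]
  have hne : ((Finset.range (n + 1)).filter fun j => rowY dy j ≤ r).Nonempty := ⟨k, hmem⟩
  rw [yRowIdx, ← Finset.coe_max' hne, WithBot.unbotD_coe, Finset.max'_eq_iff]
  refine ⟨hmem, fun j hj => ?_⟩
  rw [Finset.mem_filter] at hj
  by_contra! hkj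
  have := rowY_mono dy (Nat.succ_le_of_lt hkj)
  rw [rowY_succ] at this
  omega

lemma xColIdx_eq {c k : ℕ} (hk₁ : 1 ≤ k) (hk₂ : k ≤ n) (h₁ : colX n dx k ≤ c)
    (h₂ : c < colX n dx k + dx k) : xColIdx n dx c = k := by
  have hmem : k ∈ (Finset.Icc 1 n).filter fun j => colX n dx j ≤ c := by simp [hk₁, hk₂, h₁]
  have hne : ((Finset.Icc 1 n).filter fun j => colX n dx j ≤ c).Nonempty := ⟨k, hmem⟩
  rw [xColIdx, ← Finset.coe_min' hne, WithTop.untopD_coe]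
  refine le_antisymm (Finset.min'_le _ _ hmem) (Finset.le_min' _ _ _ fun j hj => ?_)
  simp only [Finset.mem_filter, Finset.mem_Icc] at hj
  by_contra! hjk
  have := colX_antitone n dx (show j ≤ k - 1 by omega)
  rw [← colX_add_dx n dx hk₁ hk₂] at this
  omega

lemma xColIdx_eq_of_le_of_lt {k k' c : ℕ} (hk₁ : 1 ≤ k) (hk₂ : k ≤ n) (hk'₁ : 1 ≤ k')
    (hk'₂ : k' ≤ n) (h₁ : colX n dx k ≤ c) (h₂ : c < colX n dx k + dx k)
    (h₁' : colX n dx k' ≤ c) (h₂' : c < colX n dx k' + dx k') : k = k' :=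
  (xColIdx_eq n dx hk₁ hk₂ h₁ h₂).symm.trans (xColIdx_eq n dx hk'₁ hk'₂ h₁' h₂')

end Blocks

section Zelevinsky

variable (n : ℕ) (dx dy : ℕ → ℕ)

/-- Position `2 (n - k) + 1` carries `y_k` and position `2 (n - k) + 2` carries `x_k`. -/
lemma vertex_position_cases {p : ℕ} (hp₁ : 1 ≤ p) (hp₂ : p ≤ 2 * n + 1) :
    (∃ k ≤ n, p = 2 * (n - k) + 1) ∨ ∃ k, 1 ≤ k ∧ k ≤ n ∧ p = 2 * (n - k) + 2 := by
  rcases Nat.even_or_odd p with ⟨m, hm⟩ | ⟨m, hm⟩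
  · exact Or.inr ⟨n - m + 1, by omega, by omega, by omega⟩
  · exact Or.inl ⟨n - m, by omega, by omega⟩

lemma vertRowBlock_y {k : ℕ} (hk : k ≤ n) :
    vertRowBlock n dx dy (2 * (n - k) + 1) = Finset.Ico (rowY dy k) (rowY dy k + dy k) := by
  rw [vertRowBlock, if_pos (by omega), show n - (2 * (n - k) + 1 - 1) / 2 = k by omega]

lemma vertRowBlock_x {k : ℕ} (hk₁ : 1 ≤ k) (hk₂ : k ≤ n) :
    vertRowBlock n dx dy (2 * (n - k) + 2)
      = Finset.Ico (rowX n dx dy k) (rowX n dx dy k + dx k) := by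
  rw [vertRowBlock, if_neg (by omega), show n - (2 * (n - k) + 2) / 2 + 1 = k by omega]

lemma vertColBlock_y {k : ℕ} (hk : k ≤ n) :
    vertColBlock n dx dy (2 * (n - k) + 1)
      = Finset.Ico (colY n dx dy k) (colY n dx dy k + dy k) := by
  rw [vertColBlock, if_pos (by omega), show n - (2 * (n - k) + 1 - 1) / 2 = k by omega]

lemma vertColBlock_x {k : ℕ} (hk₁ : 1 ≤ k) (hk₂ : k ≤ n) :
    vertColBlock n dx dy (2 * (n - k) + 2) = Finset.Ico (colX n dx k) (colX n dx k + dx k) := by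
  rw [vertColBlock, if_neg (by omega), show n - (2 * (n - k) + 2) / 2 + 1 = k by omega]

lemma card_vertColBlock (p : ℕ) :
    (vertColBlock n dx dy p).card = colSize n dx dy p := by
  unfold vertColBlock colSize
  split_ifs <;> simp

lemma vertColBlock_subset_range {p : ℕ} (hp₁ : 1 ≤ p) (hp₂ : p ≤ 2 * n + 1) :
    vertColBlock n dx dy p ⊆ Finset.range (dd n dx dy) := by
  intro c hc
  rw [Finset.mem_range, dd]
  rcases vertex_position_cases n hp₁ hp₂ with ⟨k, hk, rfl⟩ | ⟨k, hk₁, hk₂, rfl⟩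
  · rw [vertColBlock_y n dx dy hk, Finset.mem_Ico, colY] at hc
    have := rowY_add_le n dy hk
    omega
  · rw [vertColBlock_x n dx dy hk₁ hk₂, Finset.mem_Ico] at hc
    have := colX_add_dx_le n dx hk₁ hk₂
    omega

lemma vertRowBlock_subset_range {p : ℕ} (hp₁ : 1 ≤ p) (hp₂ : p ≤ 2 * n + 1) :
    vertRowBlock n dx dy p ⊆ Finset.range (dd n dx dy) := by
  intro i hi
  rw [Finset.mem_range, dd]
  rcases vertex_position_cases n hp₁ hp₂ with ⟨k, hk, rfl⟩ | ⟨k, hk₁, hk₂, rfl⟩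
  · rw [vertRowBlock_y n dx dy hk, Finset.mem_Ico] at hi
    have := rowY_add_le n dy hk
    omega
  · rw [vertRowBlock_x n dx dy hk₁ hk₂, Finset.mem_Ico, rowX] at hi
    have := colX_add_dx_le n dx hk₁ hk₂
    omega

lemma exists_mem_vertRowBlock {i : ℕ} (h : i < dd n dx dy) :
    ∃ p ∈ Finset.Icc 1 (2 * n + 1), i ∈ vertRowBlock n dx dy p := by
  rcases Nat.lt_or_ge i (dY n dy) with hy | hx
  · obtain ⟨k, hk, h₁, h₂⟩ := exists_rowY_le_lt n dy hy
    exact ⟨2 * (n - k) + 1, Finset.mem_Icc.mpr ⟨by omega, by omega⟩,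
      by rw [vertRowBlock_y n dx dy hk, Finset.mem_Ico]; exact ⟨h₁, h₂⟩⟩
  · obtain ⟨k, hk₁, hk₂, h₁, h₂⟩ :=
      exists_colX_le_lt n dx (c := i - dY n dy) (by rw [dd] at h; omega)
    exact ⟨2 * (n - k) + 2, Finset.mem_Icc.mpr ⟨by omega, by omega⟩,
      by rw [vertRowBlock_x n dx dy hk₁ hk₂, Finset.mem_Ico, rowX]; omega⟩

lemma eq_of_mem_vertRowBlock {p p' i : ℕ} (hp₁ : 1 ≤ p) (hp₂ : p ≤ 2 * n + 1) (hp'₁ : 1 ≤ p')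
    (hp'₂ : p' ≤ 2 * n + 1) (hi : i ∈ vertRowBlock n dx dy p)
    (hi' : i ∈ vertRowBlock n dx dy p') : p = p' := by
  rcases vertex_position_cases n hp₁ hp₂ with ⟨k, hk, rfl⟩ | ⟨k, hk₁, hk₂, rfl⟩ <;>
    rcases vertex_position_cases n hp'₁ hp'₂ with ⟨k', hk', rfl⟩ | ⟨k', hk'₁, hk'₂, rfl⟩
  · rw [vertRowBlock_y n dx dy hk, Finset.mem_Ico] at hi
    rw [vertRowBlock_y n dx dy hk', Finset.mem_Ico] at hi'
    rw [← yRowIdx_eq n dy hk hi.1 hi.2, yRowIdx_eq n dy hk' hi'.1 hi'.2]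
  · rw [vertRowBlock_y n dx dy hk, Finset.mem_Ico] at hi
    rw [vertRowBlock_x n dx dy hk'₁ hk'₂, Finset.mem_Ico, rowX] at hi'
    have := rowY_add_le n dy hk
    omega
  · rw [vertRowBlock_x n dx dy hk₁ hk₂, Finset.mem_Ico, rowX] at hi
    rw [vertRowBlock_y n dx dy hk', Finset.mem_Ico] at hi'
    have := rowY_add_le n dy hk'
    omega
  · rw [vertRowBlock_x n dx dy hk₁ hk₂, Finset.mem_Ico, rowX] at hi
    rw [vertRowBlock_x n dx dy hk'₁ hk'₂, Finset.mem_Ico, rowX] at hi'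
    rw [xColIdx_eq_of_le_of_lt n dx hk₁ hk₂ hk'₁ hk'₂ (c := i - dY n dy) (by omega) (by omega)
      (by omega) (by omega)]

lemma sum_onesIn_vertRowBlock {v : Equiv.Perm ℕ} (hv : fixesFrom (dd n dx dy) v)
    {C : Finset ℕ} (hC : C ⊆ Finset.range (dd n dx dy)) :
    ∑ p ∈ Finset.Icc 1 (2 * n + 1), onesIn v (vertRowBlock n dx dy p) C = C.card := by
  have hcover : (Finset.Icc 1 (2 * n + 1)).biUnion (vertRowBlock n dx dy)
      = Finset.range (dd n dx dy) := by
    ext i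
    simp only [Finset.mem_biUnion]
    refine ⟨fun ⟨p, hp, hi⟩ => ?_, fun hi => exists_mem_vertRowBlock n dx dy
      (Finset.mem_range.mp hi)⟩
    rw [Finset.mem_Icc] at hp
    exact vertRowBlock_subset_range n dx dy hp.1 hp.2 hi
  unfold onesIn
  rw [← Finset.card_biUnion fun p hp q hq hne => Finset.disjoint_left.mpr fun i hi hi' => by
      simp only [Finset.coe_Icc, Set.mem_Icc, Finset.mem_filter] at hp hq hi hi'
      exact hne (eq_of_mem_vertRowBlock n dx dy hp.1 hp.2 hq.1 hq.2 hi.1 hi'.1),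
    ← Finset.filter_biUnion, hcover]
  refine Finset.card_bij (fun a _ => v a) (fun a ha => (Finset.mem_filter.mp ha).2)
    (fun a _ b _ hab => v.injective hab) fun c hc => ⟨v.symm c, ?_, v.apply_symm_apply c⟩
  have hcd := Finset.mem_range.mp (hC hc)
  refine Finset.mem_filter.mpr ⟨Finset.mem_range.mpr ?_, by rwa [v.apply_symm_apply]⟩
  by_contra! h
  have := hv _ h
  rw [v.apply_symm_apply] at this
  omega

lemma pathCount_self {q : ℕ} (hq₁ : 1 ≤ q) (hq₂ : q ≤ 2 * n + 1) (L : LaceData) :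
    pathCount n dx dy L q q = colSize n dx dy q := by
  rw [pathCount, if_pos ⟨hq₁, le_rfl, hq₂⟩, Nat.sub_self, pathF,
    Finset.card_image_of_injective _ fun a b hab => (Prod.mk.inj hab).1, Finset.card_range]

lemma compF_diag {m : ℕ} {B : Finset (ℕ × ℕ)} (hB : ∀ q ∈ B, q.1 < m) :
    compF ((Finset.range m).image fun i => (i, i)) B = B := by
  ext ⟨a, b⟩
  simp only [compF, Finset.mem_image, Finset.mem_filter, Finset.mem_product, Finset.mem_range]
  constructor
  · rintro ⟨⟨⟨x₁, x₂⟩, y₁, y₂⟩, ⟨⟨⟨i, -, hi⟩, hy⟩, h₁⟩, h₂⟩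
    simp only [Prod.mk.injEq] at hi h₁ h₂
    obtain ⟨rfl, rfl⟩ := hi
    obtain ⟨rfl, rfl⟩ := h₂
    rwa [← h₁] at hy
  · exact fun hab => ⟨((a, a), (a, b)), ⟨⟨⟨a, hB _ hab, rfl⟩, hab⟩, rfl⟩, rfl⟩

lemma matchingAt_fst_lt {L : LaceData} (hL : IsLacingDiagram n dx dy L) {p : ℕ} (hp₁ : 1 ≤ p)
    (hp₂ : p ≤ 2 * n) : ∀ q ∈ matchingAt n dx dy L p, q.1 < colSize n dx dy p := by
  intro q hq
  unfold matchingAt at hq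
  unfold colSize
  split_ifs at hq ⊢
  · exact ((hL.1 _ (by omega) (by omega)).1.1 q hq).1
  · obtain ⟨r, hr, rfl⟩ := Finset.mem_image.mp hq
    exact ((hL.1 _ (by omega) (by omega)).2.1 r hr).2

lemma pathCount_succ {L : LaceData} (hL : IsLacingDiagram n dx dy L) {q : ℕ} (hq₁ : 1 ≤ q)
    (hq₂ : q + 1 ≤ 2 * n + 1) :
    pathCount n dx dy L q (q + 1) = (matchingAt n dx dy L q).card := by
  rw [pathCount, if_pos ⟨hq₁, by omega, hq₂⟩, Nat.add_sub_cancel_left, pathF, pathF, Nat.add_zero,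
    compF_diag (matchingAt_fst_lt n dx dy hL hq₁ (by omega))]

lemma sum_Icc_sub_pred (f : ℕ → ℤ) (q : ℕ) :
    ∑ u ∈ Finset.Icc 1 q, (f u - f (u - 1)) = f q - f 0 := by
  induction q with
  | zero => simp
  | succ q ih =>
    rw [Finset.sum_Icc_succ_top (by omega), ih, Nat.add_sub_cancel]
    ring

variable {n dx dy}

/-- (Z1) makes the block counts telescope, and (Z2) supplies the last one. -/
lemma IsZelevinsky.sum_onesIn_Icc {L : LaceData} {v : Equiv.Perm ℕ}
    (hL : IsLacingDiagram n dx dy L) (hv : IsZelevinsky n dx dy L v) {pv : ℕ} (hpv₁ : 1 ≤ pv)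
    (hpv₂ : pv + 1 ≤ 2 * n + 1) :
    ∑ p ∈ Finset.Icc 1 (pv + 1), (onesIn v (vertRowBlock n dx dy p) (vertColBlock n dx dy pv) : ℤ)
      = colSize n dx dy pv := by
  obtain ⟨-, hZ1, hZ2, -, -⟩ := hv
  set f : ℕ → ℤ := fun u => pathCount n dx dy L u pv - pathCount n dx dy L u (pv + 1)
  have hlace : ∀ p ∈ Finset.Icc 1 pv,
      (onesIn v (vertRowBlock n dx dy p) (vertColBlock n dx dy pv) : ℤ) = f p - f (p - 1) := by
    intro p hp
    rw [Finset.mem_Icc] at hp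
    rw [hZ1 p pv hp.1 hp.2 (by omega), laceCount]
    ring
  have hf₀ : f 0 = 0 := by simp [f, pathCount]
  rw [Finset.sum_Icc_succ_top (by omega), Finset.sum_congr rfl hlace, sum_Icc_sub_pred, hf₀,
    hZ2 pv hpv₁ hpv₂]
  simp only [f, pathCount_self n dx dy hpv₁ (by omega), pathCount_succ n dx dy hL hpv₁ hpv₂]
  ring

lemma IsZelevinsky.onesIn_eq_zero {L : LaceData} {v : Equiv.Perm ℕ}
    (hL : IsLacingDiagram n dx dy L) (hv : IsZelevinsky n dx dy L v) {pu pv : ℕ} (hpv : 1 ≤ pv)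
    (hord : pv + 2 ≤ pu) (hpu : pu ≤ 2 * n + 1) :
    onesIn v (vertRowBlock n dx dy pu) (vertColBlock n dx dy pv) = 0 := by
  set C := vertColBlock n dx dy pv
  have htotal : ∑ p ∈ Finset.Icc 1 (2 * n + 1), (onesIn v (vertRowBlock n dx dy p) C : ℤ)
      = colSize n dx dy pv := by
    rw [← Nat.cast_sum, sum_onesIn_vertRowBlock n dx dy hv.1
      (vertColBlock_subset_range n dx dy hpv (by omega)), card_vertColBlock n dx dy pv]
  have hsplit : Finset.Icc 1 (2 * n + 1)
      = Finset.Icc 1 (pv + 1) ∪ Finset.Icc (pv + 2) (2 * n + 1) := by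
    ext a
    simp only [Finset.mem_Icc, Finset.mem_union]
    omega
  rw [hsplit, Finset.sum_union (Finset.disjoint_left.mpr fun a ha ha' => by
      simp only [Finset.mem_Icc] at ha ha'; omega),
    hv.sum_onesIn_Icc hL hpv (by omega), add_eq_left] at htotal
  exact_mod_cast (Finset.sum_eq_zero_iff_of_nonneg fun p _ => Int.natCast_nonneg _).mp htotal pu
    (Finset.mem_Icc.mpr ⟨hord, hpu⟩)

lemma IsZelevinsky.apply_not_mem {L : LaceData} {v : Equiv.Perm ℕ}
    (hL : IsLacingDiagram n dx dy L) (hv : IsZelevinsky n dx dy L v) {pu pv i : ℕ}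
    (hpv : 1 ≤ pv) (hord : pv + 2 ≤ pu) (hpu : pu ≤ 2 * n + 1)
    (hi : i ∈ vertRowBlock n dx dy pu) : v i ∉ vertColBlock n dx dy pv := fun hvi => by
  have := hv.onesIn_eq_zero hL hpv hord hpu
  rw [onesIn, Finset.card_eq_zero, Finset.filter_eq_empty_iff] at this
  exact this hi hvi

lemma lt_of_fixesFrom {m : ℕ} {v : Equiv.Perm ℕ} (hv : fixesFrom m v) {x : ℕ} (hx : x < m) :
    v x < m := by
  by_contra! hc
  have := v.injective (hv _ hc)
  omega

/-- The block row `y_k` meets no column block `x_{k'}` with `k' > k + 1`. -/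
lemma IsZelevinsky.colX_succ_le_apply {L : LaceData} {v : Equiv.Perm ℕ}
    (hL : IsLacingDiagram n dx dy L) (hv : IsZelevinsky n dx dy L v) {k i : ℕ} (hk : k ≤ n)
    (h₁ : rowY dy k ≤ i) (h₂ : i < rowY dy k + dy k) : colX n dx (k + 1) ≤ v i := by
  rcases Nat.lt_or_ge (v i) (dX n dx) with hx | hy
  · obtain ⟨k', hk'₁, hk'₂, h₁', h₂'⟩ := exists_colX_le_lt n dx hx
    by_contra! hlt
    have hkk' : k + 2 ≤ k' := by
      by_contra! hk'
      have := colX_antitone n dx (show k' ≤ k + 1 by omega)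
      omega
    refine hv.apply_not_mem hL (i := i) (pu := 2 * (n - k) + 1) (pv := 2 * (n - k') + 2) (by omega)
      (by omega) (by omega) ?_ ?_
    · rw [vertRowBlock_y n dx dy hk, Finset.mem_Ico]
      exact ⟨h₁, h₂⟩
    · rw [vertColBlock_x n dx dy hk'₁ hk'₂, Finset.mem_Ico]
      exact ⟨h₁', h₂'⟩
  · exact (colX_le_dX n dx _).trans hy

/-- The column block `y_m` meets no row block `x_{k'}` with `k' < m`. -/
lemma IsZelevinsky.lt_of_apply_eq {L : LaceData} {v : Equiv.Perm ℕ}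
    (hL : IsLacingDiagram n dx dy L) (hv : IsZelevinsky n dx dy L v) {m r i : ℕ} (hm : m ≤ n)
    (h₁ : rowY dy m ≤ r) (h₂ : r < rowY dy m + dy m) (hi : i < dd n dx dy)
    (hvi : v i = dX n dx + r) : i < dY n dy + colX n dx (m - 1) := by
  rcases Nat.eq_zero_or_pos m with rfl | hm₁
  · rw [dd] at hi
    rw [Nat.zero_sub, colX_zero]
    omega
  rcases Nat.lt_or_ge i (dY n dy) with hy | hx
  · omega
  obtain ⟨k', hk'₁, hk'₂, h₁', h₂'⟩ := exists_colX_le_lt n dx (c := i - dY n dy)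
    (by rw [dd] at hi; omega)
  by_contra! hge
  have hk'm : k' < m := by
    by_contra! hk'
    have := colX_antitone n dx (show m - 1 ≤ k' - 1 by omega)
    rw [← colX_add_dx n dx hk'₁ hk'₂] at this
    omega
  refine hv.apply_not_mem hL (i := i) (pu := 2 * (n - k') + 2) (pv := 2 * (n - m) + 1) (by omega)
    (by omega) (by omega) ?_ ?_
  · rw [vertRowBlock_x n dx dy hk'₁ hk'₂, Finset.mem_Ico, rowX]
    omega
  · rw [vertColBlock_y n dx dy hm, Finset.mem_Ico, colY, hvi]
    omega

end Zelevinsky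

/-! ### Rotation, and the crosses of `P_*` -/

section Rotation

variable {K L : ℕ} {P : Finset (ℕ × ℕ)}

def InGrid (K L : ℕ) (P : Finset (ℕ × ℕ)) : Prop := ∀ p ∈ P, p.1 < K ∧ p.2 < L

lemma mem_rotF (hP : InGrid K L P) {a b : ℕ} (ha : a < K) (hb : b < L) :
    (K - 1 - a, L - 1 - b) ∈ rotF K L P ↔ (a, b) ∈ P := by
  refine ⟨fun h => ?_, fun h => Finset.mem_image_of_mem _ h⟩
  obtain ⟨⟨x, y⟩, hxy, heq⟩ := Finset.mem_image.mp h
  obtain ⟨hx, hy⟩ := hP _ hxy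
  simp only [Prod.mk.injEq] at heq
  obtain ⟨rfl, rfl⟩ : x = a ∧ y = b := by omega
  exact hxy

lemma InGrid.rotF (hP : InGrid K L P) : InGrid K L (rotF K L P) := by
  intro p hp
  obtain ⟨⟨x, y⟩, hxy, rfl⟩ := Finset.mem_image.mp hp
  have := hP _ hxy
  simp only at this ⊢
  omega

lemma rotF_rotF (hP : InGrid K L P) : rotF K L (rotF K L P) = P := by
  rw [rotF, rotF, Finset.image_image]
  refine (Finset.image_congr fun p hp => ?_).trans Finset.image_id
  have := hP p hp
  simp only [Function.comp_apply, id_eq]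
  ext <;> simp only <;> omega

lemma range_reverse_eq_map (m : ℕ) :
    (List.range m).reverse = (List.range m).map (m - 1 - ·) := by
  rw [List.range_eq_range', List.reverse_range', Nat.zero_add, ← List.range_eq_range']

lemma pipeWord_rotF (hP : InGrid K L P) :
    pipeWord K L (rotF K L P) = ((pipeWord K L P).map (K + L - 2 - ·)).reverse := by
  unfold pipeWord
  rw [List.map_flatMap, List.reverse_flatMap, range_reverse_eq_map K, List.flatMap_map]
  refine List.flatMap_congr fun i hi => ?_
  rw [List.mem_range] at hi
  rw [Function.comp_apply, List.map_filterMap, ← List.filterMap_reverse, List.reverse_reverse,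
    range_reverse_eq_map L, List.filterMap_map]
  refine List.filterMap_congr fun j hj => ?_
  rw [List.mem_range] at hj
  have hmem := mem_rotF hP (a := K - 1 - i) (b := j) (by omega) hj
  rw [show K - 1 - (K - 1 - i) = i by omega] at hmem
  simp only [Function.comp_apply, hmem]
  split_ifs
  · simp only [Option.map_some, Option.some.injEq]
    omega
  · rfl

lemma demazure_rotF (hP : InGrid K L P) :
    demazure K L (rotF K L P) = w0p (K + L) * (demazure K L P)⁻¹ * w0p (K + L) := by
  unfold demazure
  rw [pipeWord_rotF hP, hword_reverse, hword_map_tsub fun a ha => by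
      obtain ⟨i, j, hij, rfl⟩ := mem_pipeWord ha
      have := hP _ hij
      omega,
    mul_inv_rev, mul_inv_rev, w0p_inv, mul_assoc]

lemma demazure_eq_of_rotF (hP : InGrid K L P) :
    demazure K L P = w0p (K + L) * (demazure K L (rotF K L P))⁻¹ * w0p (K + L) := by
  rw [demazure_rotF hP, mul_inv_rev, mul_inv_rev, w0p_inv, inv_inv]
  simp only [← mul_assoc, w0p_mul_self, one_mul]
  rw [mul_assoc, w0p_mul_self, mul_one]

end Rotation

section Pstar

variable (n : ℕ) (dx dy : ℕ → ℕ)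

lemma yRowIdx_spec {r : ℕ} (hr : r < dY n dy) :
    yRowIdx n dy r ≤ n ∧ rowY dy (yRowIdx n dy r) ≤ r ∧
      r < rowY dy (yRowIdx n dy r) + dy (yRowIdx n dy r) := by
  obtain ⟨k, hk, h₁, h₂⟩ := exists_rowY_le_lt n dy hr
  rw [yRowIdx_eq n dy hk h₁ h₂]
  exact ⟨hk, h₁, h₂⟩

lemma yRowIdx_mono {r r' : ℕ} (h : r ≤ r') (hr' : r' < dY n dy) :
    yRowIdx n dy r ≤ yRowIdx n dy r' := by
  have hs := yRowIdx_spec n dy (h.trans_lt hr')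
  have hs' := yRowIdx_spec n dy hr'
  by_contra! hlt
  have := rowY_mono dy (Nat.succ_le_of_lt hlt)
  rw [rowY_succ] at this
  omega

lemma mem_snake_iff {r j : ℕ} (hr : r < dY n dy) :
    (r, j) ∈ snake n dx dy ↔
      colX n dx (yRowIdx n dy r + 1) ≤ j ∧ j < colX n dx (yRowIdx n dy r - 1) := by
  obtain ⟨hk, hk₁, hk₂⟩ := yRowIdx_spec n dy hr
  set k := yRowIdx n dy r
  simp only [snake, Finset.mem_biUnion, Finset.mem_Icc, Finset.mem_union, alphaBlock, betaBlock,
    Finset.mem_product, Finset.mem_Ico]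
  constructor
  · rintro ⟨l, hl, ⟨⟨hr₁, hr₂⟩, hj₁, hj₂⟩ | ⟨⟨hr₁, hr₂⟩, hj₁, hj₂⟩⟩
    · have hkl : k = l - 1 := yRowIdx_eq n dy (by omega) hr₁ hr₂
      rw [colX_add_dx n dx hl.1 hl.2] at hj₂
      have := colX_antitone n dx (show l - 1 - 1 ≤ l - 1 by omega)
      rw [hkl, Nat.sub_add_cancel hl.1]
      exact ⟨hj₁, by omega⟩
    · have hkl : k = l := yRowIdx_eq n dy hl.2 hr₁ hr₂
      rw [colX_add_dx n dx hl.1 hl.2] at hj₂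
      rw [hkl]
      exact ⟨(colX_antitone n dx (Nat.le_succ l)).trans hj₁, hj₂⟩
  · rintro ⟨hj₁, hj₂⟩
    rcases Nat.lt_or_ge j (colX n dx k) with hα | hβ
    · have hkn : k < n := by
        by_contra! h
        rw [colX_of_le n dx h] at hα
        omega
      refine ⟨k + 1, ⟨by omega, hkn⟩, Or.inl ⟨⟨hk₁, hk₂⟩, hj₁, ?_⟩⟩
      rwa [colX_add_dx n dx (by omega) hkn]
    · have hk0 : 1 ≤ k := by
        by_contra! h
        rw [show k = 0 by omega, Nat.zero_sub] at hj₂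
        rw [show k = 0 by omega] at hβ
        omega
      exact ⟨k, ⟨hk0, hk⟩, Or.inr ⟨⟨hk₁, hk₂⟩, hβ, by rwa [colX_add_dx n dx hk0 hk]⟩⟩

lemma mem_Pstar_iff {r j : ℕ} :
    (r, j) ∈ Pstar n dx dy ↔ r < dY n dy ∧ j < dX n dx ∧
      (j < colX n dx (yRowIdx n dy r + 1) ∨ colX n dx (yRowIdx n dy r - 1) ≤ j) := by
  simp only [Pstar, Finset.mem_sdiff, Finset.mem_product, Finset.mem_range]
  constructor
  · rintro ⟨⟨hr, hj⟩, hs⟩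
    rw [mem_snake_iff n dx dy hr] at hs
    exact ⟨hr, hj, by omega⟩
  · rintro ⟨hr, hj, h⟩
    rw [mem_snake_iff n dx dy hr]
    exact ⟨⟨hr, hj⟩, by omega⟩

variable {n dx dy}

lemma IsZelevinsky.mem_of_lt_colX {L₀ : LaceData} {vZ : Equiv.Perm ℕ}
    (hL₀ : IsLacingDiagram n dx dy L₀) (hvZ : IsZelevinsky n dx dy L₀ vZ)
    {P : Finset (ℕ × ℕ)} (hP : InGrid (dY n dy) (dX n dx) P)
    (hPv : demazure (dd n dx dy) (dd n dx dy) P = vZ) {r j : ℕ} (hr : r < dY n dy)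
    (hj : j < colX n dx (yRowIdx n dy r + 1)) : (r, j) ∈ P := by
  refine mem_of_le_demazure_apply (K := dd n dx dy) (L := dd n dx dy) (R₀ := 0) (R₁ := dY n dy)
    (g := 0)
    (c := fun s => colX n dx (yRowIdx n dy s + 1)) (fun p hp => ?_) (Nat.le_add_right _ _)
    (fun s s' _ hss' hs' => colX_antitone n dx (Nat.succ_le_succ (yRowIdx_mono n dy hss' hs')))
    (fun s _ _ => ⟨Nat.zero_le _, (colX_le_dX n dx _).trans (Nat.le_add_left _ _)⟩)
    (fun s _ hs => ?_)
    r j (Nat.zero_le r) hr (Nat.zero_le j) hj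
  · have := hP p hp
    exact ⟨⟨Nat.zero_le _, this.1⟩, Nat.zero_le _, by rw [dd]; omega⟩
  · obtain ⟨hk, hk₁, hk₂⟩ := yRowIdx_spec n dy hs
    rw [hPv, Nat.add_zero, Nat.zero_add]
    exact hvZ.colX_succ_le_apply hL₀ hk hk₁ hk₂

lemma IsZelevinsky.mem_of_colX_le {L₀ : LaceData} {vZ : Equiv.Perm ℕ}
    (hL₀ : IsLacingDiagram n dx dy L₀) (hvZ : IsZelevinsky n dx dy L₀ vZ)
    {P : Finset (ℕ × ℕ)} (hP : InGrid (dY n dy) (dX n dx) P)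
    (hPv : demazure (dd n dx dy) (dd n dx dy) P = vZ) {r j : ℕ} (hr : r < dY n dy)
    (hj₁ : colX n dx (yRowIdx n dy r - 1) ≤ j) (hj₂ : j < dX n dx) : (r, j) ∈ P := by
  set d := dd n dx dy
  have hd : d = dY n dy + dX n dx := rfl
  have hPd : InGrid d d P := fun p hp => by have := hP p hp; omega
  -- apply the forcing lemma to the rotation of `P`, which lies in the southeast corner
  set Q := rotF d d P
  have hQ : ∀ p ∈ Q, (dX n dx ≤ p.1 ∧ p.1 < d) ∧ (dY n dy ≤ p.2 ∧ p.2 < d) := by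
    intro p hp
    obtain ⟨⟨x, y⟩, hxy, rfl⟩ := Finset.mem_image.mp hp
    have := hP _ hxy
    simp only
    omega
  have hQv : demazure d d Q = w0p (d + d) * vZ⁻¹ * w0p (d + d) := by
    rw [demazure_rotF hPd, hPv]
  have hforced := mem_of_le_demazure_apply (P := Q) (K := d) (L := d) (R₀ := dX n dx) (R₁ := d)
    (g := dY n dy) (c := fun s => d - colX n dx (yRowIdx n dy (d - 1 - s) - 1)) hQ le_rfl
    (fun s s' _ hss' hs' => Nat.sub_le_sub_left (colX_antitone n dx (Nat.sub_le_sub_right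
      (yRowIdx_mono n dy (show d - 1 - s' ≤ d - 1 - s by omega) (by omega)) 1)) d)
    (fun s _ _ => by have := colX_le_dX n dx (yRowIdx n dy (d - 1 - s) - 1); omega)
    (fun s hs₀ hs₁ => by
      obtain ⟨hk, hk₁, hk₂⟩ := yRowIdx_spec n dy (r := d - 1 - s) (by omega)
      have hvi : vZ (vZ⁻¹ (dX n dx + (d - 1 - s))) = dX n dx + (d - 1 - s) :=
        vZ.apply_symm_apply _
      have hid : vZ⁻¹ (dX n dx + (d - 1 - s)) < d :=
        lt_of_fixesFrom (fun x hx => by rw [Equiv.Perm.inv_eq_iff_eq, hvZ.1 x hx]) (by omega)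
      have heast := hvZ.lt_of_apply_eq hL₀ hk hk₁ hk₂ hid hvi
      have hcol := colX_le_dX n dx (yRowIdx n dy (d - 1 - s) - 1)
      rw [hQv, Equiv.Perm.mul_apply, Equiv.Perm.mul_apply, w0p_apply (d + d) (s + dY n dy),
        if_pos (by omega), show d + d - 1 - (s + dY n dy) = dX n dx + (d - 1 - s) by omega,
        w0p_apply, if_pos (by omega)]
      omega)
    (d - 1 - r) (d - 1 - j) (by omega) (by omega) (by omega) (by
      rw [show d - 1 - (d - 1 - r) = r by omega]
      omega)
  exact (mem_rotF hPd (by omega) (by omega)).mp hforced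

theorem IsZelevinsky.Pstar_subset {L₀ : LaceData} {vZ : Equiv.Perm ℕ}
    (hL₀ : IsLacingDiagram n dx dy L₀) (hvZ : IsZelevinsky n dx dy L₀ vZ)
    {P : Finset (ℕ × ℕ)} (hP : InGrid (dY n dy) (dX n dx) P)
    (hPv : demazure (dd n dx dy) (dd n dx dy) P = vZ) : Pstar n dx dy ⊆ P := by
  rintro ⟨r, j⟩ h
  obtain ⟨hr, hj, hwest | heast⟩ := (mem_Pstar_iff n dx dy).mp h
  · exact hvZ.mem_of_lt_colX hL₀ hP hPv hr hwest
  · exact hvZ.mem_of_colX_le hL₀ hP hPv hr heast hj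

end Pstar

/-! ### The Demazure product of a pipe dream containing `P_*` -/

section Rectangles

def restrictRect (P : Finset (ℕ × ℕ)) (r₀ h c₀ w : ℕ) : Finset (ℕ × ℕ) :=
  (P ∩ Finset.Ico r₀ (r₀ + h) ×ˢ Finset.Ico c₀ (c₀ + w)).image fun p => (p.1 - r₀, p.2 - c₀)

lemma miniB_eq_restrictRect (n : ℕ) (dx dy : ℕ → ℕ) (P : Finset (ℕ × ℕ)) (k : ℕ) :
    miniB n dx dy P k = restrictRect P (rowY dy k) (dy k) (colX n dx k) (dx k) := rfl

lemma miniA_eq_restrictRect (n : ℕ) (dx dy : ℕ → ℕ) (P : Finset (ℕ × ℕ)) (k : ℕ) :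
    miniA n dx dy P k = restrictRect P (rowY dy (k - 1)) (dy (k - 1)) (colX n dx k) (dx k) := rfl

variable {P : Finset (ℕ × ℕ)} {r₀ h c₀ w : ℕ}

lemma mem_restrictRect {a b : ℕ} :
    (a, b) ∈ restrictRect P r₀ h c₀ w ↔ a < h ∧ b < w ∧ (r₀ + a, c₀ + b) ∈ P := by
  simp only [restrictRect, Finset.mem_image, Finset.mem_inter, Finset.mem_product,
    Finset.mem_Ico, Prod.exists, Prod.mk.injEq]
  constructor
  · rintro ⟨x, y, ⟨hxy, ⟨hx₁, hx₂⟩, hy₁, hy₂⟩, rfl, rfl⟩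
    refine ⟨by omega, by omega, ?_⟩
    rwa [Nat.add_sub_cancel' hx₁, Nat.add_sub_cancel' hy₁]
  · rintro ⟨ha, hb, hP⟩
    exact ⟨r₀ + a, c₀ + b, ⟨hP, ⟨by omega, by omega⟩, by omega, by omega⟩, by omega, by omega⟩

lemma inGrid_restrictRect : InGrid h w (restrictRect P r₀ h c₀ w) := fun ⟨_, _⟩ hp =>
  ⟨(mem_restrictRect.mp hp).1, (mem_restrictRect.mp hp).2.1⟩

lemma image_restrictRect :
    (restrictRect P r₀ h c₀ w).image (fun q => (q.1 + r₀, q.2 + c₀))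
      = P ∩ Finset.Ico r₀ (r₀ + h) ×ˢ Finset.Ico c₀ (c₀ + w) := by
  ext ⟨x, y⟩
  simp only [Finset.mem_image, Finset.mem_inter, Finset.mem_product, Finset.mem_Ico,
    Prod.exists, Prod.mk.injEq, mem_restrictRect]
  constructor
  · rintro ⟨a, b, ⟨ha, hb, hP⟩, rfl, rfl⟩
    rw [Nat.add_comm a, Nat.add_comm b]
    exact ⟨hP, ⟨by omega, by omega⟩, by omega, by omega⟩
  · rintro ⟨hP, ⟨hx₁, hx₂⟩, hy₁, hy₂⟩
    refine ⟨x - r₀, y - c₀, ⟨by omega, by omega, ?_⟩, by omega, by omega⟩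
    rwa [Nat.add_sub_cancel' hx₁, Nat.add_sub_cancel' hy₁]

lemma rectWord_eq_map_pipeWord (P : Finset (ℕ × ℕ)) (r₀ h c₀ w : ℕ) :
    rectWord P r₀ h c₀ (c₀ + w)
      = (pipeWord h w (restrictRect P r₀ h c₀ w)).map (· + (r₀ + c₀)) := by
  unfold pipeWord rectWord
  rw [List.map_flatMap, List.range'_eq_map_range, List.flatMap_map]
  refine List.flatMap_congr fun a ha => ?_
  rw [List.mem_range] at ha
  unfold rowWord
  rw [Nat.add_sub_cancel_left, List.range'_eq_map_range, ← List.map_reverse, List.filterMap_map,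
    List.map_filterMap]
  refine List.filterMap_congr fun b hb => ?_
  rw [List.mem_reverse, List.mem_range] at hb
  have hmem : (a, b) ∈ restrictRect P r₀ h c₀ w ↔ (r₀ + a, c₀ + b) ∈ P := by
    rw [mem_restrictRect]
    exact ⟨fun h => h.2.2, fun h => ⟨ha, hb, h⟩⟩
  simp only [Function.comp_apply, hmem]
  split_ifs
  · simp only [Option.map_some, Option.some.injEq]
    omega
  · rfl

end Rectangles

lemma rectWord_self (P : Finset (ℕ × ℕ)) (r₀ h a : ℕ) : rectWord P r₀ h a a = [] :=
  rectWord_eq_nil P r₀ h a a fun _ _ _ _ _ _ => by omega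

lemma rectWord_congr {P P' : Finset (ℕ × ℕ)} {r₀ h a b : ℕ}
    (hPP' : ∀ r j, r₀ ≤ r → r < r₀ + h → a ≤ j → j < b → ((r, j) ∈ P ↔ (r, j) ∈ P')) :
    rectWord P r₀ h a b = rectWord P' r₀ h a b := by
  refine List.flatMap_congr fun r hr => List.filterMap_congr fun j hj => ?_
  rw [List.mem_range'_1] at hr
  rw [List.mem_reverse, List.mem_range'_1] at hj
  simp only [hPP' r j hr.1 hr.2 hj.1 (by omega)]

/-- Letters of columns `[b, e)` of a row and of columns `[a, b)` of earlier rows differ by at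
least two, so they commute. -/
lemma hfold_rectWord_split (u : Equiv.Perm ℕ) (P : Finset (ℕ × ℕ)) (r₀ h : ℕ) {a b e : ℕ}
    (hab : a ≤ b) (hbe : b ≤ e) :
    hfold u (rectWord P r₀ h a e) = hfold u (rectWord P r₀ h b e ++ rectWord P r₀ h a b) := by
  induction h with
  | zero => rfl
  | succ h ih =>
    simp only [rectWord, List.range'_concat, one_mul, List.flatMap_append,
      List.flatMap_singleton] at ih ⊢
    rw [hfold_append, ih, rowWord_split P _ hab hbe, ← hfold_append]
    set X := (List.range' r₀ h).flatMap fun r => rowWord P r b e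
    set Y := (List.range' r₀ h).flatMap fun r => rowWord P r a b
    have hfar : ∀ x ∈ Y, ∀ y ∈ rowWord P (r₀ + h) b e, x + 2 ≤ y ∨ y + 2 ≤ x := by
      intro x hx y hy
      obtain ⟨r, hr, hxr⟩ := List.mem_flatMap.mp hx
      rw [List.mem_range'_1] at hr
      obtain ⟨j, -, -, hj, rfl⟩ := mem_rowWord hxr
      obtain ⟨j', -, hj', -, rfl⟩ := mem_rowWord hy
      omega
    rw [List.append_assoc, List.append_assoc, hfold_append u X, hfold_append u X,
      ← List.append_assoc Y, ← List.append_assoc (rowWord P (r₀ + h) b e), hfold_append _ (Y ++ _),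
      hfold_append _ (_ ++ Y), hfold_append_comm _ hfar]

lemma hword_rectWord_split (x : List ℕ) (P : Finset (ℕ × ℕ)) (r₀ h : ℕ) {a b e : ℕ}
    (hab : a ≤ b) (hbe : b ≤ e) :
    hword (x ++ rectWord P r₀ h a e)
      = hword (x ++ (rectWord P r₀ h b e ++ rectWord P r₀ h a b)) := by
  rw [hword_append, hword_append, hfold_rectWord_split _ P r₀ h hab hbe]

section Factorization

variable {n : ℕ} {dx dy : ℕ → ℕ}

/-- The four segments of block row `y_k`: east of `β_k`, `β_k`, `α_{k+1}`, west of `α_{k+1}`. -/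
lemma hword_rectWord_blockRow (P : Finset (ℕ × ℕ)) {k : ℕ} :
    hword (rectWord P (rowY dy k) (dy k) 0 (dd n dx dy))
      = hword (rectWord P (rowY dy k) (dy k) (colX n dx (k - 1)) (dd n dx dy) ++
          (rectWord P (rowY dy k) (dy k) (colX n dx k) (colX n dx (k - 1)) ++
            (rectWord P (rowY dy k) (dy k) (colX n dx (k + 1)) (colX n dx k) ++
              rectWord P (rowY dy k) (dy k) 0 (colX n dx (k + 1))))) := by
  have h₁ := colX_antitone n dx (Nat.le_succ k)
  have h₂ := colX_antitone n dx (Nat.sub_le k 1)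
  have h₃ : colX n dx (k - 1) ≤ dd n dx dy := (colX_le_dX n dx _).trans (Nat.le_add_left _ _)
  rw [← List.nil_append (rectWord P _ _ 0 _), hword_rectWord_split [] P _ _ (Nat.zero_le _) h₃,
    ← List.append_assoc, hword_rectWord_split _ P _ _ (Nat.zero_le _) h₂, ← List.append_assoc,
    hword_rectWord_split _ P _ _ (Nat.zero_le _) h₁]
  simp only [List.nil_append, List.append_assoc]

lemma mem_iff_mem_of_Pstar_subset {P P' : Finset (ℕ × ℕ)} (hP : InGrid (dY n dy) (dX n dx) P)
    (hP' : InGrid (dY n dy) (dX n dx) P') (hPs : Pstar n dx dy ⊆ P)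
    (hP's : Pstar n dx dy ⊆ P') {r j : ℕ} (h : (r, j) ∈ Pstar n dx dy ∨ dX n dx ≤ j) :
    (r, j) ∈ P ↔ (r, j) ∈ P' := by
  rcases h with h | h
  · exact iff_of_true (hPs h) (hP's h)
  · exact iff_of_false (fun hm => by have := hP _ hm; omega)
      (fun hm => by have := hP' _ hm; omega)

lemma hword_rectWord_beta {P P' : Finset (ℕ × ℕ)} {k : ℕ} (hk : k ≤ n)
    (hB : 1 ≤ k → demazure (dy k) (dx k) (miniB n dx dy P k)
      = demazure (dy k) (dx k) (miniB n dx dy P' k)) :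
    hword (rectWord P (rowY dy k) (dy k) (colX n dx k) (colX n dx (k - 1)))
      = hword (rectWord P' (rowY dy k) (dy k) (colX n dx k) (colX n dx (k - 1))) := by
  rcases Nat.eq_zero_or_pos k with rfl | hk₁
  · rw [Nat.zero_sub, rectWord_self, rectWord_self]
  rw [← colX_add_dx n dx hk₁ hk, rectWord_eq_map_pipeWord, rectWord_eq_map_pipeWord,
    hword_map_add, hword_map_add, ← miniB_eq_restrictRect,
    ← miniB_eq_restrictRect]
  exact congrArg _ (hB hk₁)

lemma miniA_succ_eq_restrictRect (P : Finset (ℕ × ℕ)) (k : ℕ) :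
    miniA n dx dy P (k + 1) = restrictRect P (rowY dy k) (dy k) (colX n dx (k + 1)) (dx (k + 1)) :=
  rfl

lemma hword_rectWord_alpha {P P' : Finset (ℕ × ℕ)} {k : ℕ} (hk : k ≤ n)
    (hA : k < n → demazure (dy k) (dx (k + 1))
        (rotF (dy k) (dx (k + 1)) (miniA n dx dy P (k + 1)))
      = demazure (dy k) (dx (k + 1)) (rotF (dy k) (dx (k + 1)) (miniA n dx dy P' (k + 1)))) :
    hword (rectWord P (rowY dy k) (dy k) (colX n dx (k + 1)) (colX n dx k))
      = hword (rectWord P' (rowY dy k) (dy k) (colX n dx (k + 1)) (colX n dx k)) := by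
  rcases Nat.lt_or_ge k n with hkn | hkn
  · rw [← Nat.add_sub_cancel k 1, ← colX_add_dx n dx (Nat.le_add_left 1 k) hkn,
      Nat.add_sub_cancel, rectWord_eq_map_pipeWord, rectWord_eq_map_pipeWord, hword_map_add,
      hword_map_add,
      ← miniA_succ_eq_restrictRect, ← miniA_succ_eq_restrictRect]
    change shiftPerm _ (demazure _ _ _) = shiftPerm _ (demazure _ _ _)
    rw [demazure_eq_of_rotF (K := dy k) (L := dx (k + 1)) (P := miniA n dx dy P (k + 1))
        inGrid_restrictRect,
      demazure_eq_of_rotF (K := dy k) (L := dx (k + 1)) (P := miniA n dx dy P' (k + 1))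
        inGrid_restrictRect]
    exact congrArg (fun v => shiftPerm _ (w0p _ * v⁻¹ * w0p _)) (hA hkn)
  · rw [colX_of_le n dx hkn, colX_of_le n dx (by omega : n ≤ k + 1), rectWord_self, rectWord_self]

lemma hword_rectWord_blockRow_congr {P P' : Finset (ℕ × ℕ)} (hP : InGrid (dY n dy) (dX n dx) P)
    (hP' : InGrid (dY n dy) (dX n dx) P') (hPs : Pstar n dx dy ⊆ P)
    (hP's : Pstar n dx dy ⊆ P') {k : ℕ} (hk : k ≤ n)
    (hB : 1 ≤ k → demazure (dy k) (dx k) (miniB n dx dy P k)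
      = demazure (dy k) (dx k) (miniB n dx dy P' k))
    (hA : k < n → demazure (dy k) (dx (k + 1))
        (rotF (dy k) (dx (k + 1)) (miniA n dx dy P (k + 1)))
      = demazure (dy k) (dx (k + 1)) (rotF (dy k) (dx (k + 1)) (miniA n dx dy P' (k + 1)))) :
    hword (rectWord P (rowY dy k) (dy k) 0 (dd n dx dy))
      = hword (rectWord P' (rowY dy k) (dy k) 0 (dd n dx dy)) := by
  have hPstar : ∀ r j, rowY dy k ≤ r → r < rowY dy k + dy k → j < dX n dx →
      (j < colX n dx (k + 1) ∨ colX n dx (k - 1) ≤ j) → (r, j) ∈ Pstar n dx dy := by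
    intro r j h₁ h₂ hj hcase
    have := rowY_add_le n dy hk
    rw [mem_Pstar_iff, yRowIdx_eq n dy hk h₁ h₂]
    exact ⟨by omega, hj, hcase⟩
  have heast := rectWord_congr (P := P) (P' := P') (r₀ := rowY dy k) (h := dy k)
    (a := colX n dx (k - 1)) (b := dd n dx dy) fun r j h₁ h₂ hj₁ _ => by
      refine mem_iff_mem_of_Pstar_subset hP hP' hPs hP's ?_
      rcases Nat.lt_or_ge j (dX n dx) with hj | hj
      · exact Or.inl (hPstar r j h₁ h₂ hj (Or.inr hj₁))
      · exact Or.inr hj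
  have hwest := rectWord_congr (P := P) (P' := P') (r₀ := rowY dy k) (h := dy k) (a := 0)
    (b := colX n dx (k + 1)) fun r j h₁ h₂ _ hj => by
      have := colX_le_dX n dx (k + 1)
      exact mem_iff_mem_of_Pstar_subset hP hP' hPs hP's
        (Or.inl (hPstar r j h₁ h₂ (by omega) (Or.inl hj)))
  rw [hword_rectWord_blockRow, hword_rectWord_blockRow, heast, hwest]
  exact hword_append_congr rfl (hword_append_congr (hword_rectWord_beta hk hB)
    (hword_append_congr (hword_rectWord_alpha hk hA) rfl))

theorem demazure_eq_of_miniB_miniA {P P' : Finset (ℕ × ℕ)} (hP : InGrid (dY n dy) (dX n dx) P)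
    (hP' : InGrid (dY n dy) (dX n dx) P') (hPs : Pstar n dx dy ⊆ P)
    (hP's : Pstar n dx dy ⊆ P')
    (hB : ∀ k, 1 ≤ k → k ≤ n → demazure (dy k) (dx k) (miniB n dx dy P k)
      = demazure (dy k) (dx k) (miniB n dx dy P' k))
    (hA : ∀ k, 1 ≤ k → k ≤ n →
      demazure (dy (k - 1)) (dx k) (rotF (dy (k - 1)) (dx k) (miniA n dx dy P k))
        = demazure (dy (k - 1)) (dx k) (rotF (dy (k - 1)) (dx k) (miniA n dx dy P' k))) :
    demazure (dd n dx dy) (dd n dx dy) P = demazure (dd n dx dy) (dd n dx dy) P' := by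
  have hrows : ∀ Q : Finset (ℕ × ℕ), InGrid (dY n dy) (dX n dx) Q →
      demazure (dd n dx dy) (dd n dx dy) Q
        = hword (rectWord Q 0 (rowY dy (n + 1)) 0 (dd n dx dy)) := by
    intro Q hQ
    have hsplit : rectWord Q 0 (dd n dx dy) 0 (dd n dx dy)
        = rectWord Q 0 (rowY dy (n + 1) + dX n dx) 0 (dd n dx dy) := rfl
    rw [demazure, pipeWord_eq_rectWord, hsplit, rectWord_add,
      rectWord_eq_nil Q (0 + rowY dy (n + 1)) (dX n dx) 0 (dd n dx dy) fun i j hi _ _ _ hij => by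
        have := hQ _ hij
        rw [Nat.zero_add] at hi
        exact absurd hi (Nat.not_le.mpr this.1),
      List.append_nil]
  rw [hrows P hP, hrows P' hP']
  suffices ∀ m ≤ n + 1, hword (rectWord P 0 (rowY dy m) 0 (dd n dx dy))
      = hword (rectWord P' 0 (rowY dy m) 0 (dd n dx dy)) from this (n + 1) le_rfl
  intro m
  induction m with
  | zero => exact fun _ => rfl
  | succ m ih =>
    intro hm
    rw [rowY_succ, rectWord_add, rectWord_add, Nat.zero_add]
    exact hword_append_congr (ih (by omega)) (hword_rectWord_blockRow_congr hP hP' hPs hP's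
      (by omega) (fun hm₁ => hB m hm₁ (by omega)) fun hmn => hA (m + 1) (by omega) (by omega))

end Factorization

/-! ### The pipe network map -/

lemma mem_powerset_product_filter {k l : ℕ} {p : Finset (ℕ × ℕ) → Prop} {Q : Finset (ℕ × ℕ)} :
    Q ∈ (Finset.range k ×ˢ Finset.range l).powerset.filter p ↔ InGrid k l Q ∧ p Q := by
  simp only [Finset.mem_filter, Finset.mem_powerset, InGrid, Finset.subset_iff,
    Finset.mem_product, Finset.mem_range]

lemma mem_pipesFin {k l : ℕ} {v : Equiv.Perm ℕ} {Q : Finset (ℕ × ℕ)} :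
    Q ∈ pipesFin k l v ↔ InGrid k l Q ∧ demazure k l Q = v :=
  mem_powerset_product_filter

section PipeNetwork

variable {n : ℕ} {dx dy : ℕ → ℕ}

lemma mem_pipesNW {v : Equiv.Perm ℕ} {P : Finset (ℕ × ℕ)} :
    P ∈ pipesNW n dx dy v ↔
      InGrid (dY n dy) (dX n dx) P ∧ demazure (dd n dx dy) (dd n dx dy) P = v :=
  mem_powerset_product_filter

lemma image_add_subset_rect {Q : Finset (ℕ × ℕ)} {r₀ h c₀ w : ℕ} (hQ : InGrid h w Q) :
    Q.image (fun q => (q.1 + r₀, q.2 + c₀)) ⊆ Finset.Ico r₀ (r₀ + h) ×ˢ Finset.Ico c₀ (c₀ + w) := by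
  intro p hp
  obtain ⟨q, hq, rfl⟩ := Finset.mem_image.mp hp
  have := hQ q hq
  simp only [Finset.mem_product, Finset.mem_Ico]
  omega

lemma restrictRect_eq_of_inter_eq {S Q : Finset (ℕ × ℕ)} {r₀ h c₀ w : ℕ}
    (hS : S ∩ Finset.Ico r₀ (r₀ + h) ×ˢ Finset.Ico c₀ (c₀ + w)
      = Q.image fun q => (q.1 + r₀, q.2 + c₀)) :
    restrictRect S r₀ h c₀ w = Q := by
  rw [restrictRect, hS, Finset.image_image]
  refine (Finset.image_congr fun q _ => ?_).trans Finset.image_id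
  simp

/-- Distinct indices use disjoint column ranges, and `α_k` lies directly above `β_k`. -/
lemma eq_of_mem_snake_blocks {k k' x y : ℕ} (hk₁ : 1 ≤ k) (hk₂ : k ≤ n) (hk'₁ : 1 ≤ k')
    (hk'₂ : k' ≤ n) (h : (x, y) ∈ alphaBlock n dx dy k ∪ betaBlock n dx dy k)
    (h' : (x, y) ∈ alphaBlock n dx dy k' ∪ betaBlock n dx dy k') :
    k = k' ∧ ((x, y) ∈ betaBlock n dx dy k ↔ (x, y) ∈ betaBlock n dx dy k') := by
  simp only [alphaBlock, betaBlock, Finset.mem_union, Finset.mem_product, Finset.mem_Ico] at h h' ⊢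
  have hkk' : k = k' := xColIdx_eq_of_le_of_lt n dx hk₁ hk₂ hk'₁ hk'₂ (c := y) (by omega)
    (by omega) (by omega) (by omega)
  subst hkk'
  have hrow := rowY_succ dy (k - 1)
  rw [Nat.sub_add_cancel hk₁] at hrow
  omega

lemma not_mem_snake_of_mem_Pstar {p : ℕ × ℕ} (hp : p ∈ Pstar n dx dy) : p ∉ snake n dx dy :=
  (Finset.mem_sdiff.mp hp).2

lemma mem_snake_of_mem_block {k : ℕ} (hk₁ : 1 ≤ k) (hk₂ : k ≤ n) {p : ℕ × ℕ}
    (hp : p ∈ alphaBlock n dx dy k ∪ betaBlock n dx dy k) : p ∈ snake n dx dy :=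
  Finset.mem_biUnion.mpr ⟨k, Finset.mem_Icc.mpr ⟨hk₁, hk₂⟩, hp⟩

def FitsBlocks (n : ℕ) (dx dy : ℕ → ℕ) (T : LaceData) : Prop :=
  ∀ k, 1 ≤ k → k ≤ n → InGrid (dy k) (dx k) (T.1 k) ∧ InGrid (dy (k - 1)) (dx k) (T.2 k)

lemma image_subset_betaBlock {T : LaceData} (hT : FitsBlocks n dx dy T) {k : ℕ} (hk₁ : 1 ≤ k)
    (hk₂ : k ≤ n) :
    (T.1 k).image (fun p => (p.1 + rowY dy k, p.2 + colX n dx k)) ⊆ betaBlock n dx dy k :=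
  image_add_subset_rect (hT k hk₁ hk₂).1

lemma image_subset_alphaBlock {T : LaceData} (hT : FitsBlocks n dx dy T) {k : ℕ} (hk₁ : 1 ≤ k)
    (hk₂ : k ≤ n) :
    (rotF (dy (k - 1)) (dx k) (T.2 k)).image (fun p => (p.1 + rowY dy (k - 1), p.2 + colX n dx k))
      ⊆ alphaBlock n dx dy k :=
  image_add_subset_rect (hT k hk₁ hk₂).2.rotF

lemma mem_PNmap {T : LaceData} {p : ℕ × ℕ} :
    p ∈ PNmap n dx dy T ↔ p ∈ Pstar n dx dy ∨ ∃ k, 1 ≤ k ∧ k ≤ n ∧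
      (p ∈ (T.1 k).image (fun q => (q.1 + rowY dy k, q.2 + colX n dx k)) ∨
       p ∈ (rotF (dy (k - 1)) (dx k) (T.2 k)).image
         (fun q => (q.1 + rowY dy (k - 1), q.2 + colX n dx k))) := by
  simp only [PNmap, Finset.mem_union, Finset.mem_biUnion, Finset.mem_Icc, and_assoc]

lemma PNmap_inter_betaBlock {T : LaceData} (hT : FitsBlocks n dx dy T) {k : ℕ} (hk₁ : 1 ≤ k)
    (hk₂ : k ≤ n) :
    PNmap n dx dy T ∩ betaBlock n dx dy k
      = (T.1 k).image fun p => (p.1 + rowY dy k, p.2 + colX n dx k) := by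
  ext ⟨x, y⟩
  rw [Finset.mem_inter, mem_PNmap]
  refine ⟨fun ⟨hp, hβ⟩ => ?_, fun hp => ⟨Or.inr ⟨k, hk₁, hk₂, Or.inl hp⟩,
    image_subset_betaBlock hT hk₁ hk₂ hp⟩⟩
  have hsnake : (x, y) ∈ alphaBlock n dx dy k ∪ betaBlock n dx dy k := Finset.mem_union_right _ hβ
  obtain hPs | ⟨k', hk'₁, hk'₂, hB | hA⟩ := hp
  · exact absurd (mem_snake_of_mem_block hk₁ hk₂ hsnake) (not_mem_snake_of_mem_Pstar hPs)
  · obtain ⟨rfl, -⟩ := eq_of_mem_snake_blocks hk'₁ hk'₂ hk₁ hk₂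
      (Finset.mem_union_right _ (image_subset_betaBlock hT hk'₁ hk'₂ hB)) hsnake
    exact hB
  · have hα := image_subset_alphaBlock hT hk'₁ hk'₂ hA
    obtain ⟨rfl, hiff⟩ := eq_of_mem_snake_blocks hk'₁ hk'₂ hk₁ hk₂
      (Finset.mem_union_left _ hα) hsnake
    have hdisj := eq_of_mem_snake_blocks hk'₁ hk'₂ hk'₁ hk'₂ (Finset.mem_union_left _ hα)
      (Finset.mem_union_left _ hα)
    simp only [alphaBlock, betaBlock, Finset.mem_product, Finset.mem_Ico] at hα hβ hdisj
    have hrow := rowY_succ dy (k' - 1)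
    rw [Nat.sub_add_cancel hk'₁] at hrow
    omega

lemma PNmap_inter_alphaBlock {T : LaceData} (hT : FitsBlocks n dx dy T) {k : ℕ} (hk₁ : 1 ≤ k)
    (hk₂ : k ≤ n) :
    PNmap n dx dy T ∩ alphaBlock n dx dy k
      = (rotF (dy (k - 1)) (dx k) (T.2 k)).image
          fun p => (p.1 + rowY dy (k - 1), p.2 + colX n dx k) := by
  ext ⟨x, y⟩
  rw [Finset.mem_inter, mem_PNmap]
  refine ⟨fun ⟨hp, hα⟩ => ?_, fun hp => ⟨Or.inr ⟨k, hk₁, hk₂, Or.inr hp⟩,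
    image_subset_alphaBlock hT hk₁ hk₂ hp⟩⟩
  have hsnake : (x, y) ∈ alphaBlock n dx dy k ∪ betaBlock n dx dy k := Finset.mem_union_left _ hα
  obtain hPs | ⟨k', hk'₁, hk'₂, hB | hA⟩ := hp
  · exact absurd (mem_snake_of_mem_block hk₁ hk₂ hsnake) (not_mem_snake_of_mem_Pstar hPs)
  · have hβ := image_subset_betaBlock hT hk'₁ hk'₂ hB
    obtain ⟨rfl, -⟩ := eq_of_mem_snake_blocks hk'₁ hk'₂ hk₁ hk₂
      (Finset.mem_union_right _ hβ) hsnake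
    simp only [alphaBlock, betaBlock, Finset.mem_product, Finset.mem_Ico] at hα hβ
    have hrow := rowY_succ dy (k' - 1)
    rw [Nat.sub_add_cancel hk'₁] at hrow
    omega
  · obtain ⟨rfl, -⟩ := eq_of_mem_snake_blocks hk'₁ hk'₂ hk₁ hk₂
      (Finset.mem_union_left _ (image_subset_alphaBlock hT hk'₁ hk'₂ hA)) hsnake
    exact hA

lemma miniB_PNmap {T : LaceData} (hT : FitsBlocks n dx dy T) {k : ℕ} (hk₁ : 1 ≤ k)
    (hk₂ : k ≤ n) : miniB n dx dy (PNmap n dx dy T) k = T.1 k :=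
  restrictRect_eq_of_inter_eq (PNmap_inter_betaBlock hT hk₁ hk₂)

lemma rotF_miniA_PNmap {T : LaceData} (hT : FitsBlocks n dx dy T) {k : ℕ} (hk₁ : 1 ≤ k)
    (hk₂ : k ≤ n) :
    rotF (dy (k - 1)) (dx k) (miniA n dx dy (PNmap n dx dy T) k) = T.2 k := by
  rw [show miniA n dx dy (PNmap n dx dy T) k = rotF (dy (k - 1)) (dx k) (T.2 k) from
    restrictRect_eq_of_inter_eq (PNmap_inter_alphaBlock hT hk₁ hk₂),
    rotF_rotF (hT k hk₁ hk₂).2]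

lemma PNmap_inGrid {T : LaceData} (hT : FitsBlocks n dx dy T) :
    InGrid (dY n dy) (dX n dx) (PNmap n dx dy T) := by
  rintro ⟨x, y⟩ hp
  rcases mem_PNmap.mp hp with hPs | ⟨k, hk₁, hk₂, hB | hA⟩
  · simp only [Pstar, Finset.mem_sdiff, Finset.mem_product, Finset.mem_range] at hPs
    exact hPs.1
  all_goals
    have h₁ := rowY_add_le n dy (j := k - 1) (by omega)
    have h₂ := rowY_add_le n dy hk₂
    have h₃ := colX_add_dx_le n dx hk₁ hk₂
  · have := image_subset_betaBlock hT hk₁ hk₂ hB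
    simp only [betaBlock, Finset.mem_product, Finset.mem_Ico] at this
    omega
  · have := image_subset_alphaBlock hT hk₁ hk₂ hA
    simp only [alphaBlock, Finset.mem_product, Finset.mem_Ico] at this
    omega

lemma PNdomain.fitsBlocks {vZ : Equiv.Perm ℕ} {T : LaceData} (hT : T ∈ PNdomain n dx dy vZ) :
    FitsBlocks n dx dy T := by
  obtain ⟨-, x, -, hTk⟩ := hT
  exact fun k hk₁ hk₂ =>
    ⟨(mem_pipesFin.mp (hTk k hk₁ hk₂).1).1, (mem_pipesFin.mp (hTk k hk₁ hk₂).2).1⟩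

lemma piOp_fst (P : Finset (ℕ × ℕ)) {k : ℕ} (hk₁ : 1 ≤ k) (hk₂ : k ≤ n) :
    (piOp n dx dy P).1 k = demazure (dy k) (dx k) (miniB n dx dy P k) :=
  if_pos ⟨hk₁, hk₂⟩

lemma piOp_snd (P : Finset (ℕ × ℕ)) {k : ℕ} (hk₁ : 1 ≤ k) (hk₂ : k ≤ n) :
    (piOp n dx dy P).2 k
      = demazure (dy (k - 1)) (dx k) (rotF (dy (k - 1)) (dx k) (miniA n dx dy P k)) :=
  if_pos ⟨hk₁, hk₂⟩

lemma IsZelevinsky.PNmap_mem_pipesNW {L₀ : LaceData} {vZ : Equiv.Perm ℕ}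
    (hL₀ : IsLacingDiagram n dx dy L₀) (hvZ : IsZelevinsky n dx dy L₀ vZ) {T : LaceData}
    (hT : T ∈ PNdomain n dx dy vZ) : PNmap n dx dy T ∈ pipesNW n dx dy vZ := by
  have hfit := PNdomain.fitsBlocks hT
  obtain ⟨-, -, ⟨P, hP, rfl⟩, hTk⟩ := hT
  obtain ⟨hPg, hPv⟩ := mem_pipesNW.mp hP
  refine mem_pipesNW.mpr ⟨PNmap_inGrid hfit, hPv ▸ demazure_eq_of_miniB_miniA (PNmap_inGrid hfit)
    hPg Finset.subset_union_left (hvZ.Pstar_subset hL₀ hPg hPv) (fun k hk₁ hk₂ => ?_)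
    (fun k hk₁ hk₂ => ?_)⟩
  · rw [miniB_PNmap hfit hk₁ hk₂, (mem_pipesFin.mp (hTk k hk₁ hk₂).1).2, piOp_fst P hk₁ hk₂]
  · rw [rotF_miniA_PNmap hfit hk₁ hk₂, (mem_pipesFin.mp (hTk k hk₁ hk₂).2).2, piOp_snd P hk₁ hk₂]

lemma PNmap_injOn (vZ : Equiv.Perm ℕ) : Set.InjOn (PNmap n dx dy) (PNdomain n dx dy vZ) := by
  intro T hT T' hT' heq
  have hcomp : ∀ k, T.1 k = T'.1 k ∧ T.2 k = T'.2 k := by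
    intro k
    by_cases hk : 1 ≤ k ∧ k ≤ n
    · constructor
      · rw [← miniB_PNmap (PNdomain.fitsBlocks hT) hk.1 hk.2,
          ← miniB_PNmap (PNdomain.fitsBlocks hT') hk.1 hk.2, heq]
      · rw [← rotF_miniA_PNmap (PNdomain.fitsBlocks hT) hk.1 hk.2,
          ← rotF_miniA_PNmap (PNdomain.fitsBlocks hT') hk.1 hk.2, heq]
    · obtain ⟨h₁, h₂⟩ := hT.1 k (by omega)
      obtain ⟨h₁', h₂'⟩ := hT'.1 k (by omega)
      exact ⟨h₁.trans h₁'.symm, h₂.trans h₂'.symm⟩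
  exact Prod.ext (funext fun k => (hcomp k).1) (funext fun k => (hcomp k).2)

def miniTuple (n : ℕ) (dx dy : ℕ → ℕ) (P : Finset (ℕ × ℕ)) : LaceData :=
  (fun k => if 1 ≤ k ∧ k ≤ n then miniB n dx dy P k else ∅,
   fun k => if 1 ≤ k ∧ k ≤ n then rotF (dy (k - 1)) (dx k) (miniA n dx dy P k) else ∅)

lemma miniTuple_fst (P : Finset (ℕ × ℕ)) {k : ℕ} (hk₁ : 1 ≤ k) (hk₂ : k ≤ n) :
    (miniTuple n dx dy P).1 k = miniB n dx dy P k :=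
  if_pos ⟨hk₁, hk₂⟩

lemma miniTuple_snd (P : Finset (ℕ × ℕ)) {k : ℕ} (hk₁ : 1 ≤ k) (hk₂ : k ≤ n) :
    (miniTuple n dx dy P).2 k = rotF (dy (k - 1)) (dx k) (miniA n dx dy P k) :=
  if_pos ⟨hk₁, hk₂⟩

lemma miniTuple_mem_PNdomain {vZ : Equiv.Perm ℕ} {P : Finset (ℕ × ℕ)}
    (hP : P ∈ pipesNW n dx dy vZ) : miniTuple n dx dy P ∈ PNdomain n dx dy vZ := by
  refine ⟨fun k hk => ⟨if_neg (by omega), if_neg (by omega)⟩, piOp n dx dy P, ⟨P, hP, rfl⟩,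
    fun k hk₁ hk₂ => ⟨mem_pipesFin.mpr ⟨?_, ?_⟩, mem_pipesFin.mpr ⟨?_, ?_⟩⟩⟩
  · rw [miniTuple_fst P hk₁ hk₂]
    exact inGrid_restrictRect
  · rw [miniTuple_fst P hk₁ hk₂, piOp_fst P hk₁ hk₂]
  · rw [miniTuple_snd P hk₁ hk₂]
    exact inGrid_restrictRect.rotF
  · rw [miniTuple_snd P hk₁ hk₂, piOp_snd P hk₁ hk₂]

lemma PNmap_miniTuple {P : Finset (ℕ × ℕ)} (hP : InGrid (dY n dy) (dX n dx) P)
    (hPs : Pstar n dx dy ⊆ P) : PNmap n dx dy (miniTuple n dx dy P) = P := by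
  have hB : ∀ k, 1 ≤ k → k ≤ n →
      ((miniTuple n dx dy P).1 k).image (fun q => (q.1 + rowY dy k, q.2 + colX n dx k))
        = P ∩ betaBlock n dx dy k := fun k hk₁ hk₂ => by
    rw [miniTuple_fst P hk₁ hk₂, miniB_eq_restrictRect, image_restrictRect]
    rfl
  have hA : ∀ k, 1 ≤ k → k ≤ n →
      (rotF (dy (k - 1)) (dx k) ((miniTuple n dx dy P).2 k)).image
        (fun q => (q.1 + rowY dy (k - 1), q.2 + colX n dx k)) = P ∩ alphaBlock n dx dy k :=
    fun k hk₁ hk₂ => by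
      rw [miniTuple_snd P hk₁ hk₂, miniA_eq_restrictRect, rotF_rotF inGrid_restrictRect,
        image_restrictRect]
      rfl
  ext p
  rw [mem_PNmap]
  constructor
  · rintro (h | ⟨k, hk₁, hk₂, h | h⟩)
    · exact hPs h
    · exact (Finset.mem_inter.mp (hB k hk₁ hk₂ ▸ h)).1
    · exact (Finset.mem_inter.mp (hA k hk₁ hk₂ ▸ h)).1
  · intro hp
    by_cases hs : p ∈ snake n dx dy
    · obtain ⟨k, hk, hblock⟩ := Finset.mem_biUnion.mp hs
      rw [Finset.mem_Icc] at hk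
      rcases Finset.mem_union.mp hblock with hα | hβ
      · exact Or.inr ⟨k, hk.1, hk.2, Or.inr (hA k hk.1 hk.2 ▸ Finset.mem_inter.mpr ⟨hp, hα⟩)⟩
      · exact Or.inr ⟨k, hk.1, hk.2, Or.inl (hB k hk.1 hk.2 ▸ Finset.mem_inter.mpr ⟨hp, hβ⟩)⟩
    · refine Or.inl (Finset.mem_sdiff.mpr ⟨?_, hs⟩)
      simpa only [Finset.mem_product, Finset.mem_range] using hP p hp

end PipeNetwork

/-- The pipe network map is a bijection from
`⋃_{v ∈ X_Ω} ∏_k (Pipes(v_k) × Pipes(v^k))` onto `Pipes(v_0, v(Ω))`. -/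
theorem pipe_network_bijection (n : ℕ) (dx dy : ℕ → ℕ) (L₀ : LaceData)
    (hL₀ : IsLacingDiagram n dx dy L₀) (vZ : Equiv.Perm ℕ)
    (hvZ : IsZelevinsky n dx dy L₀ vZ) :
    Set.BijOn (PNmap n dx dy) (PNdomain n dx dy vZ)
      {P | P ∈ pipesNW n dx dy vZ} := by
  refine ⟨fun T hT => hvZ.PNmap_mem_pipesNW hL₀ hT, PNmap_injOn vZ, fun P hP => ?_⟩
  obtain ⟨hPg, hPv⟩ := mem_pipesNW.mp hP
  exact ⟨miniTuple n dx dy P, miniTuple_mem_PNdomain hP,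
    PNmap_miniTuple hPg (hvZ.Pstar_subset hL₀ hPg hPv)⟩

end QP
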